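/- arXiv:1505.05006 — 4 statements merged into one kernel-verified Lean document; each statement's English description precedes it below -/
import Mathlib

section
/- Let (X_k^i)_{i∈ℤ, k∈ℕ} be i.i.d. random variables with P(X_k^i = 1) = p = 1 − P(X_k^i = −1) for some p ∈ [1/2, 1], and let S_n^i = Σ_{k=1}^n X_k^i. Then almost surely (1/n) · min_{i ∈ {−n, …, n}} S_n^i converges to 2p − 1 as n → ∞. -/
open MeasureTheory ProbabilityTheory Filter
open scoped ENNReal NNReal Topology

/-- The trajectory attached to the frog starting at site `i`:
`frogS X ω i n = ∑_{k=1}^n X_k^i(ω)` is its displacement `n` steps after its activation. -/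
def frogS {Ω : Type*} (X : ℤ → ℕ → Ω → ℤ) (ω : Ω) (i : ℤ) (n : ℕ) : ℤ :=
  ∑ k ∈ Finset.Icc 1 n, X i k ω

/-- First time (as an element of `ℕ∞`) at which the walk attached to frog `j`
(which starts at `j`) visits site `i`. -/
noncomputable def hitTime (S : ℤ → ℕ → ℤ) (j i : ℤ) : ℕ∞ :=
  sInf {t : ℕ∞ | ∃ n : ℕ, t = n ∧ j + S j n = i}

/-- Activation time `T_i` of the frog initially at site `i`, in the frog model with one
active frog at `0` and one sleeping frog at every other site: since every activated frog
follows its attached trajectory from its activation time onwards, `T_i` is the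
first-passage-percolation infimum over activation chains `0 = c 0, c 1, …, c m = i` of the
sums of the successive hitting times.  This is the (unique, canonical) solution of
`T_0 = 0`, `T_i = inf {n ∈ ℕ : ∃ j, T_j ≤ n ∧ j + S^j_{n - T_j} = i}`. -/
noncomputable def frogT (S : ℤ → ℕ → ℤ) (i : ℤ) : ℕ∞ :=
  sInf {t : ℕ∞ | ∃ (m : ℕ) (c : ℕ → ℤ), c 0 = 0 ∧ c m = i ∧
    t = ∑ l ∈ Finset.range m, hitTime S (c l) (c (l + 1))}

/-- Activation times `T_i⁺` in the frog model without negative frogs (one active frog at `0`,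
one sleeping frog at every positive integer site and no frogs at negative sites):
only activation chains staying in the non-negative integers are available. -/
noncomputable def frogTplus (S : ℤ → ℕ → ℤ) (i : ℤ) : ℕ∞ :=
  sInf {t : ℕ∞ | ∃ (m : ℕ) (c : ℕ → ℤ), c 0 = 0 ∧ c m = i ∧ (∀ l ≤ m, 0 ≤ c l) ∧
    t = ∑ l ∈ Finset.range m, hitTime S (c l) (c (l + 1))}

/-- Position `Z_n^i` of frog `i` at time `n`: it sits at `i` until its activation time and
then follows its attached trajectory. -/
noncomputable def frogZ (S : ℤ → ℕ → ℤ) (n : ℕ) (i : ℤ) : ℤ :=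
  if frogT S i ≤ (n : ℕ∞) then i + S i (n - (frogT S i).toNat) else i

/-- `M_n`, the maximum of the positions of the active frogs at time `n`. -/
noncomputable def frogM (S : ℤ → ℕ → ℤ) (n : ℕ) : ℤ :=
  sSup {z : ℤ | ∃ i : ℤ, frogT S i ≤ (n : ℕ∞) ∧ frogZ S n i = z}

/-- `m_n`, the minimum of the positions of the active frogs at time `n`. -/
noncomputable def frogm (S : ℤ → ℕ → ℤ) (n : ℕ) : ℤ :=
  sInf {z : ℤ | ∃ i : ℤ, frogT S i ≤ (n : ℕ∞) ∧ frogZ S n i = z}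

/-- The set `A_n` of active frogs at time `n`, as a `Finset`.  (Activation spreads with
speed at most one, so all active frogs lie in `[-n, n]`.) -/
noncomputable def frogA (S : ℤ → ℕ → ℤ) (n : ℕ) : Finset ℤ :=
  (Finset.Icc (-(n : ℤ)) n).filter fun i => frogT S i ≤ (n : ℕ∞)

/-- The random input of the frog model on `ℤ` with drift parameter `p`: an i.i.d. family
`(X_k^i)_{i ∈ ℤ, k ∈ ℕ}` with `P(X_k^i = 1) = p = 1 - P(X_k^i = -1)`. -/
structure IsFrogModel {Ω : Type*} [MeasurableSpace Ω] (P : Measure Ω)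
    (X : ℤ → ℕ → Ω → ℤ) (p : ℝ) : Prop where
  meas : ∀ i k, Measurable (X i k)
  indep : iIndepFun (fun ik : ℤ × ℕ => X ik.1 ik.2) P
  prob_one : ∀ i k, P {ω | X i k ω = 1} = ENNReal.ofReal p
  prob_neg_one : ∀ i k, P {ω | X i k ω = -1} = ENNReal.ofReal (1 - p)

/-!
Each step has mean `2p - 1` and lies in `[-1, 1]`, so by Hoeffding's inequality
`P(S_n^i ≤ n (2p - 1 - ε)) ≤ exp (-ε² / 2) ^ n`. A union bound over the `2n + 1` walks only costs
a factor `2n + 1`, which keeps the bounds summable, and Borel–Cantelli gives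
`min_i S_n^i > n (2p - 1 - ε)` for all large `n`, almost surely. The matching upper bound comes
from the single walk `S_n^0 ≥ min_i S_n^i`, and `ε` runs through the countable set `1 / (m + 1)`.
-/

section Concentration

variable {Ω : Type*} [MeasurableSpace Ω] {μ : Measure Ω}

lemma ae_eventually_notMem_of_summable [IsFiniteMeasure μ] {s : ℕ → Set Ω} {f : ℕ → ℝ}
    (hf : Summable f) (hs : ∀ n, μ.real (s n) ≤ f n) :
    ∀ᵐ ω ∂μ, ∀ᶠ n in atTop, ω ∉ s n := by
  have hf0 n : 0 ≤ f n := measureReal_nonneg.trans (hs n)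
  refine ae_eventually_notMem (ne_top_of_le_ne_top (ENNReal.ofReal_ne_top (r := ∑' n, f n)) ?_)
  rw [ENNReal.ofReal_tsum_of_nonneg hf0 hf]
  refine ENNReal.tsum_le_tsum fun n => ?_
  rw [← ofReal_measureReal]
  exact ENNReal.ofReal_le_ofReal (hs n)

lemma exp_neg_sq_div_mul_eq_pow (n : ℕ) (c ε : ℝ) :
    Real.exp (-(n * ε) ^ 2 / (2 * (n * c))) = Real.exp (-ε ^ 2 / (2 * c)) ^ n := by
  rw [← Real.exp_nat_mul]
  congr 1
  rcases eq_or_ne (n : ℝ) 0 with hn | hn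
  · simp [hn]
  rcases eq_or_ne c 0 with hc | hc
  · simp [hc]
  field_simp

lemma measureReal_le_sum_le_exp {ι : Type*} {Y : ι → Ω → ℝ} (hind : iIndepFun Y μ) {m : ℝ}
    {c : ℝ≥0} {s : Finset ι} (hY : ∀ i ∈ s, HasSubgaussianMGF (fun ω => Y i ω - m) c μ)
    {ε : ℝ} (hε : 0 ≤ ε) :
    μ.real {ω | s.card * (m + ε) ≤ ∑ i ∈ s, Y i ω} ≤ Real.exp (-ε ^ 2 / (2 * c)) ^ s.card := by
  have hcent : iIndepFun (fun i ω => Y i ω - m) μ :=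
    hind.comp (fun _ y => y - m) fun _ => measurable_id.sub_const m
  have h := HasSubgaussianMGF.measure_sum_ge_le_of_iIndepFun hcent hY (ε := s.card * ε)
    (by positivity)
  simp only [Finset.sum_sub_distrib, Finset.sum_const, nsmul_eq_mul, NNReal.coe_mul,
    NNReal.coe_natCast, exp_neg_sq_div_mul_eq_pow] at h
  convert h using 2
  ext ω
  simp only [Set.mem_ofPred_eq]
  constructor <;> intro h' <;> linarith

lemma measureReal_sum_le_le_exp {ι : Type*} {Y : ι → Ω → ℝ} (hind : iIndepFun Y μ) {m : ℝ}
    {c : ℝ≥0} {s : Finset ι} (hY : ∀ i ∈ s, HasSubgaussianMGF (fun ω => Y i ω - m) c μ)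
    {ε : ℝ} (hε : 0 ≤ ε) :
    μ.real {ω | ∑ i ∈ s, Y i ω ≤ s.card * (m - ε)} ≤ Real.exp (-ε ^ 2 / (2 * c)) ^ s.card := by
  have hneg : ∀ i ∈ s, HasSubgaussianMGF (fun ω => -Y i ω - -m) c μ := fun i hi => by
    convert (hY i hi).neg using 1
    ext ω
    simp only [Pi.neg_apply]
    ring
  have h := measureReal_le_sum_le_exp (hind.comp (fun _ y => -y) fun _ => measurable_neg) hneg hε
  convert h using 2
  ext ω
  simp only [Set.mem_ofPred_eq, Function.comp_apply, Finset.sum_neg_distrib]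
  constructor <;> intro h' <;> linarith

end Concentration

lemma tendsto_div_of_forall_nat_eventually {u : ℕ → ℝ} {a : ℝ}
    (hlow : ∀ m : ℕ, ∀ᶠ n : ℕ in atTop, n * (a - 1 / (m + 1)) ≤ u n)
    (hup : ∀ m : ℕ, ∀ᶠ n : ℕ in atTop, u n ≤ n * (a + 1 / (m + 1))) :
    Tendsto (fun n => u n / n) atTop (𝓝 a) := by
  rw [tendsto_order]
  constructor
  · intro b hb
    obtain ⟨m, hm⟩ := exists_nat_one_div_lt (sub_pos.2 hb)
    filter_upwards [hlow m, eventually_gt_atTop 0] with n hn hn0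
    have hn0' : (0 : ℝ) < n := Nat.cast_pos.2 hn0
    rw [lt_div_iff₀ hn0']
    nlinarith
  · intro b hb
    obtain ⟨m, hm⟩ := exists_nat_one_div_lt (sub_pos.2 hb)
    filter_upwards [hup m, eventually_gt_atTop 0] with n hn hn0
    have hn0' : (0 : ℝ) < n := Nat.cast_pos.2 hn0
    rw [div_lt_iff₀ hn0']
    nlinarith

lemma summable_two_mul_add_one_mul_pow {r : ℝ} (h0 : 0 ≤ r) (h1 : r < 1) :
    Summable fun n : ℕ => (2 * n + 1) * r ^ n := by
  have hr : ‖r‖ < 1 := by rwa [Real.norm_of_nonneg h0]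
  refine (((summable_pow_mul_geometric_of_norm_lt_one 1 hr).mul_left 2).add
    (summable_geometric_of_lt_one h0 h1)).congr fun n => ?_
  ring

namespace IsFrogModel

variable {Ω : Type*} [MeasurableSpace Ω] {P : Measure Ω} {X : ℤ → ℕ → Ω → ℤ} {p : ℝ}

lemma iIndepFun_row (hX : IsFrogModel P X p) (i : ℤ) :
    iIndepFun (fun k ω => (X i k ω : ℝ)) P :=
  (hX.indep.precomp (g := fun k : ℕ => (i, k)) (Prod.mk_right_injective i)).comp
    (fun _ z => (z : ℝ)) fun _ => measurable_of_countable _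

variable [IsProbabilityMeasure P]

lemma param_mem_Icc (hX : IsFrogModel P X p) : p ∈ Set.Icc 0 1 := by
  have hdisj : Disjoint {ω | X 0 0 ω = 1} {ω | X 0 0 ω = -1} :=
    Set.disjoint_left.2 fun ω h1 h2 => by simp_all
  have h := measureReal_le_one (μ := P) (s := {ω | X 0 0 ω = 1} ∪ {ω | X 0 0 ω = -1})
  -- `ofReal` truncates at `0`, so the two probabilities are at least `p` and `1 - p`.
  rw [measureReal_union hdisj (hX.meas 0 0 (measurableSet_singleton (-1))), measureReal_def,
    measureReal_def, hX.prob_one, hX.prob_neg_one, ENNReal.toReal_ofReal',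
    ENNReal.toReal_ofReal'] at h
  constructor <;> linarith [le_max_left p 0, le_max_left (1 - p) 0, le_max_right p 0,
    le_max_right (1 - p) 0]

lemma measureReal_eq_one (hX : IsFrogModel P X p) (i : ℤ) (k : ℕ) :
    P.real {ω | X i k ω = 1} = p := by
  rw [measureReal_def, hX.prob_one, ENNReal.toReal_ofReal hX.param_mem_Icc.1]

lemma measureReal_eq_neg_one (hX : IsFrogModel P X p) (i : ℤ) (k : ℕ) :
    P.real {ω | X i k ω = -1} = 1 - p := by
  rw [measureReal_def, hX.prob_neg_one, ENNReal.toReal_ofReal (sub_nonneg.2 hX.param_mem_Icc.2)]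

lemma ae_eq_one_or_eq_neg_one (hX : IsFrogModel P X p) (i : ℤ) (k : ℕ) :
    ∀ᵐ ω ∂P, X i k ω = 1 ∨ X i k ω = -1 := by
  have hA : MeasurableSet {ω | X i k ω = 1} := hX.meas i k (measurableSet_singleton 1)
  have hB : MeasurableSet {ω | X i k ω = -1} := hX.meas i k (measurableSet_singleton (-1))
  have hdisj : Disjoint {ω | X i k ω = 1} {ω | X i k ω = -1} :=
    Set.disjoint_left.2 fun ω h1 h2 => by simp_all
  refine ae_iff.2 ((prob_compl_eq_zero_iff (hA.union hB)).2 ?_)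
  rw [measure_union hdisj hB, hX.prob_one, hX.prob_neg_one,
    ← ENNReal.ofReal_add hX.param_mem_Icc.1 (sub_nonneg.2 hX.param_mem_Icc.2)]
  simp

lemma integral_eq (hX : IsFrogModel P X p) (i : ℤ) (k : ℕ) :
    ∫ ω, (X i k ω : ℝ) ∂P = 2 * p - 1 := by
  have hA : MeasurableSet {ω | X i k ω = 1} := hX.meas i k (measurableSet_singleton 1)
  have hB : MeasurableSet {ω | X i k ω = -1} := hX.meas i k (measurableSet_singleton (-1))
  have hae : (fun ω => (X i k ω : ℝ)) =ᵐ[P]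
      fun ω => {ω | X i k ω = 1}.indicator 1 ω - {ω | X i k ω = -1}.indicator (1 : Ω → ℝ) ω := by
    filter_upwards [hX.ae_eq_one_or_eq_neg_one i k] with ω h
    rcases h with h | h <;> simp [h]
  rw [integral_congr_ae hae, integral_sub ((integrable_const 1).indicator hA)
    ((integrable_const 1).indicator hB), integral_indicator_one hA, integral_indicator_one hB,
    hX.measureReal_eq_one, hX.measureReal_eq_neg_one]
  ring

lemma hasSubgaussianMGF (hX : IsFrogModel P X p) (i : ℤ) (k : ℕ) :
    HasSubgaussianMGF (fun ω => (X i k ω : ℝ) - (2 * p - 1)) 1 P := by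
  have h := hasSubgaussianMGF_of_mem_Icc (μ := P) (X := fun ω => (X i k ω : ℝ)) (a := -1) (b := 1)
    ((measurable_of_countable _).comp (hX.meas i k)).aemeasurable ?_
  · rw [hX.integral_eq] at h
    convert h
    norm_num
  filter_upwards [hX.ae_eq_one_or_eq_neg_one i k] with ω h
  rcases h with h | h <;> simp [h]

lemma measureReal_frogS_le_le (hX : IsFrogModel P X p) (i : ℤ) (n : ℕ) {ε : ℝ} (hε : 0 ≤ ε) :
    P.real {ω | (frogS X ω i n : ℝ) ≤ n * (2 * p - 1 - ε)} ≤ Real.exp (-ε ^ 2 / 2) ^ n := by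
  simpa [frogS] using measureReal_sum_le_le_exp (hX.iIndepFun_row i) (s := Finset.Icc 1 n)
    (fun k _ => hX.hasSubgaussianMGF i k) hε

lemma measureReal_le_frogS_le (hX : IsFrogModel P X p) (i : ℤ) (n : ℕ) {ε : ℝ} (hε : 0 ≤ ε) :
    P.real {ω | n * (2 * p - 1 + ε) ≤ (frogS X ω i n : ℝ)} ≤ Real.exp (-ε ^ 2 / 2) ^ n := by
  simpa [frogS] using measureReal_le_sum_le_exp (hX.iIndepFun_row i) (s := Finset.Icc 1 n)
    (fun k _ => hX.hasSubgaussianMGF i k) hε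

lemma ae_eventually_lt_frogS (hX : IsFrogModel P X p) {ε : ℝ} (hε : 0 < ε) :
    ∀ᵐ ω ∂P, ∀ᶠ n : ℕ in atTop, ∀ i ∈ Finset.Icc (-(n : ℤ)) n,
      n * (2 * p - 1 - ε) < (frogS X ω i n : ℝ) := by
  set r := Real.exp (-ε ^ 2 / 2)
  have hr : r < 1 := Real.exp_lt_one_iff.2 (by nlinarith)
  have hbound (n : ℕ) : P.real (⋃ i ∈ Finset.Icc (-(n : ℤ)) n,
      {ω | (frogS X ω i n : ℝ) ≤ n * (2 * p - 1 - ε)}) ≤ (2 * n + 1) * r ^ n := by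
    have hcard : (Finset.Icc (-(n : ℤ)) n).card = 2 * n + 1 := by
      rw [Int.card_Icc]
      omega
    calc _ ≤ ∑ i ∈ Finset.Icc (-(n : ℤ)) n, r ^ n :=
          (measureReal_biUnion_finset_le _ _).trans
            (Finset.sum_le_sum fun i _ => hX.measureReal_frogS_le_le i n hε.le)
      _ = (2 * n + 1) * r ^ n := by
          rw [Finset.sum_const, hcard, nsmul_eq_mul]
          push_cast
          ring
  filter_upwards [ae_eventually_notMem_of_summable
    (summable_two_mul_add_one_mul_pow (Real.exp_nonneg _) hr) hbound] with ω hω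
  filter_upwards [hω] with n hn i hi
  simp only [Set.mem_iUnion, Set.mem_ofPred_eq, not_exists, not_le] at hn
  exact hn i hi

lemma ae_eventually_frogS_lt (hX : IsFrogModel P X p) (i : ℤ) {ε : ℝ} (hε : 0 < ε) :
    ∀ᵐ ω ∂P, ∀ᶠ n : ℕ in atTop, (frogS X ω i n : ℝ) < n * (2 * p - 1 + ε) := by
  have hr : Real.exp (-ε ^ 2 / 2) < 1 := Real.exp_lt_one_iff.2 (by nlinarith)
  filter_upwards [ae_eventually_notMem_of_summable
    (summable_geometric_of_lt_one (Real.exp_nonneg _) hr)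
    (hX.measureReal_le_frogS_le i · hε.le)] with ω hω
  filter_upwards [hω] with n hn
  simpa using hn

end IsFrogModel

/-- **Lemma 2 (minimum of independent random walks).**
If `(X_k^i)` is an i.i.d. family with `P(X = 1) = p = 1 - P(X = -1)`, `1/2 ≤ p ≤ 1`, and
`S_n^i = ∑_{k=1}^n X_k^i`, then almost surely
`(1/n) · min_{i ∈ {-n, …, n}} S_n^i → 2p - 1`. -/
theorem min_of_independent_walks
    {Ω : Type*} [MeasurableSpace Ω] (P : Measure Ω) [IsProbabilityMeasure P]
    (X : ℤ → ℕ → Ω → ℤ) (p : ℝ) (hmodel : IsFrogModel P X p) :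
    ∀ᵐ ω ∂P, Tendsto (fun n : ℕ =>
        (((Finset.Icc (-(n : ℤ)) n).inf' (Finset.nonempty_Icc.mpr (by omega))
            (fun i => frogS X ω i n) : ℤ) : ℝ) / n)
      atTop (𝓝 (2 * p - 1)) := by
  have hlow := ae_all_iff.2 fun m : ℕ =>
    hmodel.ae_eventually_lt_frogS (ε := 1 / (m + 1)) (by positivity)
  have hup := ae_all_iff.2 fun m : ℕ =>
    hmodel.ae_eventually_frogS_lt 0 (ε := 1 / (m + 1)) (by positivity)
  filter_upwards [hlow, hup] with ω hlow hup
  refine tendsto_div_of_forall_nat_eventually (fun m => ?_) (fun m => ?_)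
  · filter_upwards [hlow m] with n hn
    obtain ⟨i, hi, hmin⟩ :=
      Finset.exists_mem_eq_inf' (Finset.nonempty_Icc.mpr (by omega : -(n : ℤ) ≤ n))
        fun i => frogS X ω i n
    rw [hmin]
    exact (hn i hi).le
  · filter_upwards [hup m] with n hn
    exact (Int.cast_le.2 (Finset.inf'_le _ (by simp))).trans hn.le
end

section
/- For every drift parameter p with 1/2 < p < 1, the expected activation time of the frog at site 1 in the frog model is strictly smaller than the expected hitting time of the point 1 by a single p-drift random walk: E[T_1] < 1/(2p − 1). -/
open MeasureTheory ProbabilityTheory Filter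
open scoped ENNReal NNReal Topology

/-!
Frog `0` alone wakes frog `1` at the first passage time `τ` of its walk to `1`, so `T_1 ≤ τ`, and
the truncated Wald identity gives `E[τ] ≤ 1/(2p-1)`. With positive probability frog `0` first steps
left twice while frog `-1` steps right twice; then frog `1` is woken through `-1` by time `3`,
whereas `τ ≥ 5`. Hence `E[T_1] + 2 P(this event) ≤ E[τ]`.
-/

open Finset

lemma hitTime_le_of_eq {S : ℤ → ℕ → ℤ} {j i : ℤ} {n : ℕ} (h : j + S j n = i) :
    hitTime S j i ≤ n :=
  sInf_le ⟨n, rfl, h⟩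

lemma le_hitTime_iff {S : ℤ → ℕ → ℤ} {j i : ℤ} {k : ℕ} :
    k ≤ hitTime S j i ↔ ∀ m < k, j + S j m ≠ i := by
  refine ⟨fun h m hm heq => ?_, fun h => le_sInf ?_⟩
  · exact hm.not_ge (Nat.cast_le.mp (h.trans (hitTime_le_of_eq heq)))
  · rintro _ ⟨n, rfl, hn⟩
    exact Nat.cast_le.mpr (not_lt.mp fun hlt => h n hlt hn)

lemma frogT_le_hitTime (S : ℤ → ℕ → ℤ) (i : ℤ) : frogT S i ≤ hitTime S 0 i :=
  sInf_le ⟨1, fun l => if l = 0 then 0 else i, rfl, rfl, by simp⟩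

lemma frogT_le_hitTime_add_hitTime (S : ℤ → ℕ → ℤ) (i j : ℤ) :
    frogT S i ≤ hitTime S 0 j + hitTime S j i :=
  sInf_le ⟨2, fun l => if l = 0 then 0 else if l = 1 then j else i, rfl, rfl, by
    simp [sum_range_succ]⟩

noncomputable def firstPassage (f : ℕ → ℤ) : ℕ∞ :=
  hitTime (fun _ n => ∑ k ∈ Icc 1 n, f k) 0 1

lemma le_firstPassage_iff {f : ℕ → ℤ} {k : ℕ} :
    k ≤ firstPassage f ↔ ∀ m < k, ∑ j ∈ Icc 1 m, f j ≠ 1 := by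
  simp only [firstPassage, le_hitTime_iff, zero_add]

lemma lt_firstPassage_iff {f : ℕ → ℤ} {k : ℕ} :
    k < firstPassage f ↔ ∀ m ≤ k, ∑ j ∈ Icc 1 m, f j ≠ 1 := by
  rw [← ENat.add_one_le_iff (ENat.natCast_ne_top k), ← Nat.cast_add_one, le_firstPassage_iff]
  simp only [Nat.lt_succ_iff]

lemma card_up_le_card_down_add_one {f : ℕ → ℤ} (hf : ∀ k, f k = 1 ∨ f k = -1) (n : ℕ) :
    #{k ∈ range n | ((k : ℕ) : ℕ∞) < firstPassage f ∧ f (k + 1) = 1} ≤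
      #{k ∈ range n | ((k : ℕ) : ℕ∞) < firstPassage f ∧ f (k + 1) = -1} + 1 := by
  set up := fun n => #{k ∈ range n | ((k : ℕ) : ℕ∞) < firstPassage f ∧ f (k + 1) = 1}
  set down := fun n => #{k ∈ range n | ((k : ℕ) : ℕ∞) < firstPassage f ∧ f (k + 1) = -1}
  -- Before the passage time the position is `up - down`; being `≠ 1`, it is then `≤ 0`.
  suffices h : ∀ n, up n ≤ down n + 1 ∧
      (n ≤ firstPassage f → ∑ j ∈ Icc 1 n, f j = up n - down n) from (h n).1
  intro n
  induction n with
  | zero => simp [up, down]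
  | succ n ih =>
    have hsum : ∑ j ∈ Icc 1 (n + 1), f j = ∑ j ∈ Icc 1 n, f j + f (n + 1) :=
      sum_Icc_succ_top (by omega) f
    simp only [up, down, range_add_one, filter_insert] at ih ⊢
    by_cases hn : (n : ℕ∞) < firstPassage f
    · have hpos := ih.2 hn.le
      have hne := lt_firstPassage_iff.mp hn n le_rfl
      rcases hf (n + 1) with h | h <;> simp [hn, h, hsum] <;> omega
    · have hn' : ¬((n + 1 : ℕ) : ℕ∞) ≤ firstPassage f :=
        fun h => hn ((Nat.cast_lt.mpr n.lt_add_one).trans_le h)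
      simp only [hn, false_and, if_false]
      exact ⟨ih.1, fun h => absurd h hn'⟩

lemma ENat.toENNReal_eq_tsum_ite (t : ℕ∞) :
    (t : ℝ≥0∞) = ∑' k : ℕ, if (k : ℕ∞) < t then 1 else 0 := by
  induction t using ENat.recTopCoe with
  | top => simp
  | coe m =>
    rw [tsum_eq_sum (s := range m) fun k hk => by simpa using hk]
    simp [filter_true_of_mem fun k => mem_range.mp]

lemma measurableSet_lt_firstPassage {Ω : Type*} {mΩ : MeasurableSpace Ω} {ξ : ℕ → Ω → ℤ} {k : ℕ}
    (hξ : ∀ j ≤ k, Measurable (ξ j)) :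
    MeasurableSet {ω | (k : ℕ∞) < firstPassage fun j => ξ j ω} := by
  have hset : {ω | (k : ℕ∞) < firstPassage fun j => ξ j ω} =
      ⋂ m ∈ Set.Iic k, {ω | ∑ j ∈ Icc 1 m, ξ j ω ≠ 1} := by
    ext; simp [lt_firstPassage_iff]
  rw [hset]
  refine MeasurableSet.biInter (Set.to_countable _) fun m hm => ?_
  have hsum : Measurable fun ω => ∑ j ∈ Icc 1 m, ξ j ω :=
    Finset.measurable_sum _ fun j hj => hξ j ((mem_Icc.mp hj).2.trans hm)
  exact (hsum (measurableSet_singleton 1)).compl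

section Probability

variable {Ω : Type*} [MeasurableSpace Ω] {P : Measure Ω}

lemma lintegral_ite_one_zero {E : Set Ω} (hE : MeasurableSet E) [∀ ω, Decidable (ω ∈ E)] :
    ∫⁻ ω, (if ω ∈ E then 1 else 0) ∂P = P E := by
  rw [← lintegral_indicator_one hE]
  simp only [Set.indicator_apply, Pi.one_apply]

lemma lintegral_enat_eq_tsum_measure_lt {τ : Ω → ℕ∞}
    (hτ : ∀ k : ℕ, MeasurableSet {ω | (k : ℕ∞) < τ ω}) :
    ∫⁻ ω, (τ ω : ℝ≥0∞) ∂P = ∑' k : ℕ, P {ω | (k : ℕ∞) < τ ω} := by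
  simp_rw [ENat.toENNReal_eq_tsum_ite]
  rw [lintegral_tsum fun k => (measurable_const.ite (hτ k) measurable_const).aemeasurable]
  exact tsum_congr fun k => lintegral_ite_one_zero (hτ k)

lemma lintegral_card_filter {ι : Type*} (s : Finset ι) {E : ι → Set Ω}
    (hE : ∀ i, MeasurableSet (E i)) [∀ i ω, Decidable (ω ∈ E i)] :
    ∫⁻ ω, (#{i ∈ s | ω ∈ E i} : ℝ≥0∞) ∂P = ∑ i ∈ s, P (E i) := by
  simp_rw [card_filter, Nat.cast_sum, Nat.cast_ite, Nat.cast_one, Nat.cast_zero]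
  refine (lintegral_finsetSum' s fun i _ => ?_).trans
    (sum_congr rfl fun i _ => lintegral_ite_one_zero (hE i))
  exact (measurable_const.ite (hE i) measurable_const).aemeasurable

lemma ae_eq_one_or_eq_neg_one [IsProbabilityMeasure P] {Y : Ω → ℤ} {p : ℝ} (hY : Measurable Y)
    (h1 : P {ω | Y ω = 1} = .ofReal p) (h2 : P {ω | Y ω = -1} = .ofReal (1 - p)) :
    ∀ᵐ ω ∂P, Y ω = 1 ∨ Y ω = -1 := by
  have hp1 : p ≤ 1 := ENNReal.ofReal_le_one.mp (h1 ▸ prob_le_one)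
  have hp0 : 1 - p ≤ 1 := ENNReal.ofReal_le_one.mp (h2 ▸ prob_le_one)
  have h : P {ω | Y ω = 1} + P {ω | Y ω = -1} = 1 := by
    rw [h1, h2, ← ENNReal.ofReal_add (by linarith) (by linarith)]
    simp
  have hdisj : Disjoint {ω | Y ω = 1} {ω | Y ω = -1} :=
    Set.disjoint_left.mpr fun ω h1 h2 => by simp_all
  have hcompl : {ω | ¬(Y ω = 1 ∨ Y ω = -1)} = ({ω | Y ω = 1} ∪ {ω | Y ω = -1})ᶜ := by
    ext; simp
  have hmeas : MeasurableSet ({ω | Y ω = 1} ∪ {ω | Y ω = -1}) :=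
    (hY (measurableSet_singleton 1)).union (hY (measurableSet_singleton (-1)))
  rw [ae_iff, hcompl, prob_compl_eq_zero_iff hmeas,
    measure_union hdisj (hY (measurableSet_singleton (-1))), h]

lemma measure_inter_preimage_eq_mul_of_measurableSet_iSup_lt {ι β : Type*} [Preorder ι]
    [MeasurableSpace β] {ξ : ι → Ω → β} (hξ : ∀ i, Measurable (ξ i)) (hind : iIndepFun ξ P)
    {i : ι} {A : Set Ω} (hA : MeasurableSet[⨆ j ∈ Set.Iio i, .comap (ξ j) inferInstance] A)
    {B : Set β} (hB : MeasurableSet B) :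
    P (A ∩ ξ i ⁻¹' B) = P A * P (ξ i ⁻¹' B) := by
  have hindep := indep_iSup_of_disjoint (fun j => (hξ j).comap_le) hind
    (S := Set.Iio i) (T := {i}) (by simp)
  refine (Indep_iff _ _ _).mp hindep A _ hA ?_
  exact le_iSup₂ (f := fun j (_ : j ∈ ({i} : Set ι)) => MeasurableSpace.comap (ξ j) inferInstance)
    i rfl _ ⟨B, hB, rfl⟩

variable [IsProbabilityMeasure P] {ξ : ℕ → Ω → ℤ} {p : ℝ}

/-- Truncated Wald: by independence `E[ξ (k+1); k < τ] = (2p - 1) P(k < τ)`, and these increments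
add up to the walk stopped at `τ`, which is at most `1`. -/
lemma mul_sum_measure_lt_firstPassage_le (hξ : ∀ k, Measurable (ξ k)) (hind : iIndepFun ξ P)
    (h1 : ∀ k, P {ω | ξ k ω = 1} = .ofReal p) (h2 : ∀ k, P {ω | ξ k ω = -1} = .ofReal (1 - p))
    (hp : 1 / 2 < p) (n : ℕ) :
    .ofReal (2 * p - 1) * ∑ k ∈ range n, P {ω | (k : ℕ∞) < firstPassage fun j => ξ j ω} ≤ 1 := by
  set A := fun k : ℕ => {ω | (k : ℕ∞) < firstPassage fun j => ξ j ω}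
  have hA (k : ℕ) : MeasurableSet (A k) := measurableSet_lt_firstPassage fun j _ => hξ j
  have hstep (k : ℕ) (c : ℤ) :
      P (A k ∩ ξ (k + 1) ⁻¹' {c}) = P (A k) * P {ω | ξ (k + 1) ω = c} :=
    measure_inter_preimage_eq_mul_of_measurableSet_iSup_lt hξ hind
      (measurableSet_lt_firstPassage fun j hj =>
        Measurable.of_comap_le (le_iSup₂ (f := fun j (_ : j ∈ Set.Iio (k + 1)) =>
          MeasurableSpace.comap (ξ j) inferInstance) j (Nat.lt_succ_of_le hj)))
      (measurableSet_singleton c)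
  have hpm : ∀ᵐ ω ∂P, ∀ k, ξ k ω = 1 ∨ ξ k ω = -1 :=
    ae_all_iff.mpr fun k => ae_eq_one_or_eq_neg_one (hξ k) (h1 k) (h2 k)
  have hcount : ∑ k ∈ range n, P (A k) * .ofReal p ≤
      1 + ∑ k ∈ range n, P (A k) * .ofReal (1 - p) := by
    classical
    have hE (c : ℤ) (k : ℕ) : MeasurableSet (A k ∩ ξ (k + 1) ⁻¹' {c}) :=
      (hA k).inter (hξ _ (measurableSet_singleton c))
    calc ∑ k ∈ range n, P (A k) * .ofReal p
        = ∫⁻ ω, (#{k ∈ range n | ω ∈ A k ∩ ξ (k + 1) ⁻¹' {1}} : ℝ≥0∞) ∂P := by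
          rw [lintegral_card_filter _ (hE 1)]
          exact sum_congr rfl fun k _ => by rw [hstep, h1]
      _ ≤ ∫⁻ ω, 1 + (#{k ∈ range n | ω ∈ A k ∩ ξ (k + 1) ⁻¹' {-1}} : ℝ≥0∞) ∂P := by
          refine lintegral_mono_ae ?_
          filter_upwards [hpm] with ω hω
          simp only [A, Set.mem_inter_iff, Set.mem_ofPred_eq, Set.mem_preimage,
            Set.mem_singleton_iff]
          rw [add_comm]
          exact_mod_cast card_up_le_card_down_add_one hω n
      _ = 1 + ∑ k ∈ range n, P (A k) * .ofReal (1 - p) := by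
          rw [lintegral_add_left measurable_const, lintegral_const, measure_univ, one_mul,
            lintegral_card_filter _ (hE (-1))]
          exact congrArg _ (sum_congr rfl fun k _ => by rw [hstep, h2])
  have hp1 : p ≤ 1 := ENNReal.ofReal_le_one.mp (h1 0 ▸ prob_le_one)
  have hfin : ∑ k ∈ range n, P (A k) * .ofReal (1 - p) ≠ ⊤ :=
    ENNReal.sum_ne_top.mpr fun k _ => ENNReal.mul_ne_top (measure_ne_top P _) ENNReal.ofReal_ne_top
  have hsplit : ENNReal.ofReal p = .ofReal (2 * p - 1) + .ofReal (1 - p) := by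
    rw [← ENNReal.ofReal_add (by linarith) (by linarith)]
    ring_nf
  simp only [hsplit, mul_add, sum_add_distrib] at hcount
  rw [mul_sum]
  simp only [mul_comm (ENNReal.ofReal (2 * p - 1))]
  exact (ENNReal.add_le_add_iff_right hfin).mp hcount

theorem lintegral_firstPassage_le (hξ : ∀ k, Measurable (ξ k)) (hind : iIndepFun ξ P)
    (h1 : ∀ k, P {ω | ξ k ω = 1} = .ofReal p) (h2 : ∀ k, P {ω | ξ k ω = -1} = .ofReal (1 - p))
    (hp : 1 / 2 < p) :
    ∫⁻ ω, (firstPassage fun k => ξ k ω : ℝ≥0∞) ∂P ≤ .ofReal (1 / (2 * p - 1)) := by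
  have hpos : 0 < 2 * p - 1 := by linarith
  rw [lintegral_enat_eq_tsum_measure_lt fun k => measurableSet_lt_firstPassage fun j _ => hξ j,
    ENNReal.tsum_eq_iSup_nat, ENNReal.ofReal_div_of_pos hpos, ENNReal.ofReal_one]
  refine iSup_le fun n => ?_
  rw [ENNReal.le_div_iff_mul_le (.inl (ENNReal.ofReal_pos.mpr hpos).ne')
    (.inl ENNReal.ofReal_ne_top), mul_comm]
  exact mul_sum_measure_lt_firstPassage_le hξ hind h1 h2 hp n

end Probability

lemma ProbabilityTheory.iIndepFun.measure_biInter_preimage_ne_zero {Ω ι : Type*} [MeasurableSpace Ω]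
    {P : Measure Ω} {β : ι → Type*} {m : ∀ i, MeasurableSpace (β i)} {f : ∀ i, Ω → β i}
    (hind : iIndepFun f P) (S : Finset ι) {sets : ∀ i, Set (β i)}
    (hsets : ∀ i ∈ S, MeasurableSet (sets i)) (hpos : ∀ i ∈ S, P (f i ⁻¹' sets i) ≠ 0) :
    P (⋂ i ∈ S, f i ⁻¹' sets i) ≠ 0 := by
  rw [hind.measure_inter_preimage_eq_mul S hsets]
  exact prod_ne_zero_iff.mpr hpos

lemma frogT_frogS_one_le_three {Ω : Type*} {X : ℤ → ℕ → Ω → ℤ} {ω : Ω} (h0 : X 0 1 ω = -1)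
    (h1 : X (-1) 1 ω = 1) (h2 : X (-1) 2 ω = 1) : frogT (frogS X ω) 1 ≤ 3 :=
  calc frogT (frogS X ω) 1 ≤ hitTime (frogS X ω) 0 (-1) + hitTime (frogS X ω) (-1) 1 :=
        frogT_le_hitTime_add_hitTime _ 1 (-1)
    _ ≤ 1 + 2 := add_le_add (hitTime_le_of_eq (n := 1) (by simp [frogS, h0]))
        (hitTime_le_of_eq (n := 2) (by simp [frogS, sum_Icc_succ_top, h1, h2]))
    _ = 3 := by norm_num

lemma five_le_firstPassage {f : ℕ → ℤ} (h1 : f 1 = -1) (h2 : f 2 = -1) (h3 : f 3 ≤ 1)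
    (h4 : f 4 ≤ 1) : 5 ≤ firstPassage f := by
  refine le_firstPassage_iff.mpr fun m hm => ?_
  interval_cases m <;> simp [sum_Icc_succ_top] <;> omega

lemma frogT_one_add_two_le_hitTime {Ω : Type*} {X : ℤ → ℕ → Ω → ℤ} {ω : Ω}
    (h01 : X 0 1 ω = -1) (h02 : X 0 2 ω = -1) (h03 : X 0 3 ω ≤ 1) (h04 : X 0 4 ω ≤ 1)
    (h11 : X (-1) 1 ω = 1) (h12 : X (-1) 2 ω = 1) :
    frogT (frogS X ω) 1 + 2 ≤ hitTime (frogS X ω) 0 1 :=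
  calc frogT (frogS X ω) 1 + 2 ≤ 3 + 2 := add_le_add_left (frogT_frogS_one_le_three h01 h11 h12) 2
    _ = 5 := by norm_num
    _ ≤ hitTime (frogS X ω) 0 1 := five_le_firstPassage h01 h02 h03 h04

/-- **Key step of Lemma 4.**
For `1/2 < p < 1`, the expected activation time of the frog at site `1` is strictly
smaller than the expected hitting time `E[T_1^s] = 1/(2p - 1)` of the point `1` by a
single `p`-drift random walk. -/
theorem frog_expected_T_one_lt
    {Ω : Type*} [MeasurableSpace Ω] (P : Measure Ω) [IsProbabilityMeasure P]
    (X : ℤ → ℕ → Ω → ℤ) (p : ℝ) (hmodel : IsFrogModel P X p)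
    (hp : 1 / 2 < p) (hp1 : p < 1) :
    ∫⁻ ω, (frogT (frogS X ω) 1 : ℝ≥0∞) ∂P < ENNReal.ofReal (1 / (2 * p - 1)) := by
  have hX := hmodel.meas
  have h1 := hmodel.prob_one
  have h2 := hmodel.prob_neg_one
  -- Frog `0` steps left twice while frog `-1` steps right twice.
  set S : Finset (ℤ × ℕ) := {(0, 1), (0, 2), (-1, 1), (-1, 2)}
  set E := ⋂ i ∈ S, (fun ω => X i.1 i.2 ω) ⁻¹' {if i.1 = 0 then -1 else 1}
  have hE : MeasurableSet E :=
    Finset.measurableSet_biInter S fun i _ => hX i.1 i.2 (measurableSet_singleton _)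
  have hPE : P E ≠ 0 := by
    refine hmodel.indep.measure_biInter_preimage_ne_zero S (fun _ _ => measurableSet_singleton _) ?_
    have hq : ENNReal.ofReal (1 - p) ≠ 0 := (ENNReal.ofReal_pos.mpr (by linarith)).ne'
    have hp' : ENNReal.ofReal p ≠ 0 := (ENNReal.ofReal_pos.mpr (by linarith)).ne'
    simp [S, Set.preimage, h1, h2, hq, hp']
  have hbound : ∀ᵐ ω ∂P, (frogT (frogS X ω) 1 : ℝ≥0∞) + E.indicator 2 ω ≤
      (hitTime (frogS X ω) 0 1 : ℝ≥0∞) := by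
    filter_upwards [ae_eq_one_or_eq_neg_one (hX 0 3) (h1 0 3) (h2 0 3),
      ae_eq_one_or_eq_neg_one (hX 0 4) (h1 0 4) (h2 0 4)] with ω h3 h4
    by_cases hω : ω ∈ E
    · obtain ⟨h01, h02, h11, h12⟩ : X 0 1 ω = -1 ∧ X 0 2 ω = -1 ∧ X (-1) 1 ω = 1 ∧
          X (-1) 2 ω = 1 := by simpa [E, S] using hω
      rw [Set.indicator_of_mem hω, Pi.ofNat_apply, ← ENat.toENNReal_ofNat, ← ENat.toENNReal_add,
        ENat.toENNReal_le]
      exact frogT_one_add_two_le_hitTime h01 h02 (by omega) (by omega) h11 h12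
    · rw [Set.indicator_of_notMem hω, add_zero]
      exact ENat.toENNReal_le.mpr (frogT_le_hitTime _ 1)
  have hwald := lintegral_firstPassage_le (ξ := fun k => X 0 k) (fun k => hX 0 k)
    (hmodel.indep.precomp (g := fun k : ℕ => ((0 : ℤ), k)) (Prod.mk_right_injective 0))
    (fun k => h1 0 k) (fun k => h2 0 k) hp
  have hle : ∫⁻ ω, (frogT (frogS X ω) 1 : ℝ≥0∞) ∂P + 2 * P E ≤ .ofReal (1 / (2 * p - 1)) := by
    rw [← lintegral_indicator_const hE, ← lintegral_add_right _ (measurable_const.indicator hE)]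
    exact (lintegral_mono_ae hbound).trans hwald
  refine (ENNReal.lt_add_right ?_ (mul_ne_zero two_ne_zero hPE)).trans_le hle
  exact ne_top_of_le_ne_top ENNReal.ofReal_ne_top (le_self_add.trans hle)
end

section
/- For 1/2 < p < 1 and all n, k ∈ ℕ₀, the expected number a_n(k) of frogs at distance 2k below the maximum in the modified frog model satisfies E[a_n(k)] ≤ (2 − p)p / ((1 − p)(2p − 1)p^k). -/
open MeasureTheory ProbabilityTheory Filter
open scoped ENNReal NNReal Topology

/-- One step of the modified frog model, described through the configuration
`c : ℕ → ℕ`, where `c k` is the number of active frogs at distance `2k` below the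
current maximum (all active frogs share the parity of the maximum, and in the modified
model there is one sleeping frog at every site strictly to the right of the maximum and
no other sleeping frog).  `ξ k j = true` means that the `j`-th active frog at level `k`
jumps to the right in this step.  If some frog at the maximum jumps to the right, the
maximum advances by one and wakes the sleeping frog sitting there; otherwise the maximum
moves one step to the left (and a new sleeping frog is deposited on the vacated site,
which keeps the description above valid). -/
def frogStep (c : ℕ → ℕ) (ξ : ℕ → ℕ → Bool) : ℕ → ℕ :=
  let R : ℕ → ℕ := fun k => ((Finset.range (c k)).filter fun j => ξ k j = true).card
  let L : ℕ → ℕ := fun k => c k - R k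
  if 0 < R 0 then fun k => if k = 0 then R 0 + 1 else R k + L (k - 1)
  else fun k => R (k + 1) + L k

/-- The configuration of the modified frog model at time `n`, driven by the i.i.d.
jump decisions `ξ t k j` (time `t`, level `k`, frog `j`): `frogConfig ξ n k` is the
number of active frogs at distance `2k` below the maximum `M_n^mod` at time `n`.
Initially there is a single active frog at the maximum. -/
def frogConfig (ξ : ℕ → ℕ → ℕ → Bool) : ℕ → ℕ → ℕ
  | 0 => fun k => if k = 0 then 1 else 0
  | n + 1 => frogStep (frogConfig ξ n) (ξ n)

/-- The random input of the modified frog model: i.i.d. Bernoulli(`p`) jump decisions. -/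
structure IsFrogCoins {Ω : Type*} [MeasurableSpace Ω] (P : Measure Ω)
    (ξ : ℕ → ℕ → ℕ → Ω → Bool) (p : ℝ) : Prop where
  meas : ∀ t k j, Measurable (ξ t k j)
  indep : iIndepFun (fun t : ℕ × ℕ × ℕ => ξ t.1 t.2.1 t.2.2) P
  prob_true : ∀ t k j, P {ω | ξ t k j ω = true} = ENNReal.ofReal p

/-!
Let `q = 1 - p` and let `a = a_n(0) ≥ 1` be the number of frogs at the maximum. The maximum
retreats exactly on the event `B` that all of them jump left, of probability `q ^ a`.
Conditionally on the past, one step gives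
`E[a_{n+1}(k)] ≤ p E[a_n(k)] + (if k = 0 then 1 + q² else q E[a_n(k-1)]) + p q² E[a_n(k+1)]`:
a frog at level `k ≠ 0` stays there if it jumps right off `B` or left on `B`, which has
probability at most `p` because its coin is independent of `B` and `q ≤ p`; a frog at level
`k + 1` moves up only on `B`, and `q ^ a ≤ q²` unless `a = 1`, when level `k + 1` is empty. At the
maximum, the newly woken frog and the `a` frogs retreating with it contribute
`(1 - q ^ a) + a q ^ a ≤ 1 + q²`. Since `p + p q + q² = 1`, induction on `n` bounds
`p q p ^ k E[a_n(k)]` by `1 + q²`, and `(1 + q²) / (p q) ≤ (2 - p) p / ((1 - p) (2 p - 1))`.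
-/

theorem ProbabilityTheory.IndepFun.lintegral_comp_eq_lintegral_lintegral
    {Ω A B : Type*} [MeasurableSpace Ω] [MeasurableSpace A] [MeasurableSpace B]
    {P : Measure Ω} [IsFiniteMeasure P] {X : Ω → A} {Y : Ω → B}
    (hXY : IndepFun X Y P) (hX : Measurable X) (hY : Measurable Y)
    {g : A → B → ℝ≥0∞} (hg : Measurable (Function.uncurry g)) :
    ∫⁻ ω, g (X ω) (Y ω) ∂P = ∫⁻ ω', ∫⁻ ω, g (X ω') (Y ω) ∂P ∂P := by
  calc ∫⁻ ω, g (X ω) (Y ω) ∂P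
      = ∫⁻ z, Function.uncurry g z ∂(P.map X).prod (P.map Y) := by
        rw [← (indepFun_iff_map_prod_eq_prod_map_map hX.aemeasurable hY.aemeasurable).1 hXY,
          lintegral_map hg (hX.prodMk hY)]
        rfl
    _ = ∫⁻ x, ∫⁻ y, g x y ∂P.map Y ∂P.map X := lintegral_prod _ hg.aemeasurable
    _ = ∫⁻ ω', ∫⁻ ω, g (X ω') (Y ω) ∂P ∂P := by
        have hmeas : Measurable fun x => ∫⁻ y, g x y ∂P.map Y := hg.lintegral_prod_right'
        rw [lintegral_map hmeas hX]
        congr with x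
        exact lintegral_map (hg.comp measurable_prodMk_left) hY

theorem ENNReal.natCast_mul_pow_le {q : ℝ≥0∞} (hq : 2 * q ≤ 1) (a : ℕ) :
    a * q ^ a ≤ q ^ a + q ^ 2 := by
  match a with
  | 0 => simp
  | 1 => simp
  | m + 2 =>
    have h : (m + 1 : ℝ≥0∞) * q ^ m ≤ 1 := calc
      (m + 1 : ℝ≥0∞) * q ^ m ≤ 2 ^ m * q ^ m := by
        gcongr
        exact_mod_cast Nat.lt_two_pow_self
      _ = (2 * q) ^ m := (mul_pow ..).symm
      _ ≤ 1 := pow_le_one' hq m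
    calc ((m + 2 : ℕ) : ℝ≥0∞) * q ^ (m + 2) = q ^ (m + 2) + (m + 1) * q ^ m * q ^ 2 := by
          push_cast
          ring
      _ ≤ q ^ (m + 2) + 1 * q ^ 2 := by gcongr
      _ = q ^ (m + 2) + q ^ 2 := by rw [one_mul]

theorem ENNReal.le_ofReal_div_of_ofReal_mul_le {a : ℝ≥0∞} {x c : ℝ} (hc : 0 < c)
    (h : ENNReal.ofReal c * a ≤ ENNReal.ofReal x) : a ≤ ENNReal.ofReal (x / c) := by
  rwa [ENNReal.ofReal_div_of_pos hc, ENNReal.le_div_iff_mul_le (.inl (by simpa using hc))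
    (.inl ENNReal.ofReal_ne_top), mul_comm]

namespace FrogModel

open Finset

def jumpCount (c : ℕ → ℕ) (ξ : ℕ → ℕ → Bool) (l : ℕ) (b : Bool) : ℕ :=
  #{j ∈ range (c l) | ξ l j = b}

lemma jumpCount_le (c : ℕ → ℕ) (ξ : ℕ → ℕ → Bool) (l : ℕ) (b : Bool) :
    jumpCount c ξ l b ≤ c l :=
  (card_filter_le _ _).trans_eq (card_range _)

lemma jumpCount_true_add_false (c : ℕ → ℕ) (ξ : ℕ → ℕ → Bool) (l : ℕ) :
    jumpCount c ξ l true + jumpCount c ξ l false = c l := by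
  simpa [jumpCount] using card_filter_add_card_filter_not (s := range (c l)) (ξ l · = true)

lemma jumpCount_true_eq_zero_iff {c : ℕ → ℕ} {ξ : ℕ → ℕ → Bool} {l : ℕ} :
    jumpCount c ξ l true = 0 ↔ ∀ j < c l, ξ l j = false := by
  simp [jumpCount, filter_eq_empty_iff]

lemma jumpCount_congr {c c' : ℕ → ℕ} {ξ ξ' : ℕ → ℕ → Bool} {l : ℕ} (hc : c l = c' l)
    (hξ : ∀ j < c l, ξ l j = ξ' l j) (b : Bool) : jumpCount c ξ l b = jumpCount c' ξ' l b := by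
  unfold jumpCount
  rw [← hc]
  exact congrArg card (filter_congr fun j hj => by rw [hξ j (mem_range.1 hj)])

lemma frogStep_apply (c : ℕ → ℕ) (ξ : ℕ → ℕ → Bool) (k : ℕ) :
    frogStep c ξ k = if 0 < jumpCount c ξ 0 true then
      (if k = 0 then jumpCount c ξ 0 true + 1
        else jumpCount c ξ k true + jumpCount c ξ (k - 1) false)
    else jumpCount c ξ (k + 1) true + jumpCount c ξ k false := by
  have hL : ∀ l, c l - jumpCount c ξ l true = jumpCount c ξ l false := fun l => by
    have := jumpCount_true_add_false c ξ l
    omega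
  rw [← hL, ← hL]
  unfold frogStep jumpCount
  exact ite_apply ..

lemma frogStep_congr {c c' : ℕ → ℕ} {ξ ξ' : ℕ → ℕ → Bool} {k : ℕ}
    (hc : ∀ l ≤ k + 1, c l = c' l) (hξ : ∀ l ≤ k + 1, ∀ j < c l, ξ l j = ξ' l j) :
    frogStep c ξ k = frogStep c' ξ' k := by
  have h : ∀ l ≤ k + 1, ∀ b, jumpCount c ξ l b = jumpCount c' ξ' l b :=
    fun l hl => jumpCount_congr (hc l hl) (hξ l hl)
  rw [frogStep_apply, frogStep_apply, h 0 (by omega)]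
  split_ifs
  · rfl
  · rw [h k (by omega), h (k - 1) (by omega)]
  · rw [h k (by omega), h (k + 1) le_rfl]

lemma frogStep_le {c : ℕ → ℕ} {N : ℕ} (hN : 1 ≤ N) (hc : ∀ l, c l ≤ N) (ξ : ℕ → ℕ → Bool)
    (k : ℕ) : frogStep c ξ k ≤ 2 * N := by
  have h := fun l b => (jumpCount_le c ξ l b).trans (hc l)
  rw [frogStep_apply]
  split_ifs
  · linarith [h 0 true]
  · linarith [h k true, h (k - 1) false]
  · linarith [h (k + 1) true, h k false]

lemma frogConfig_le_two_pow (ξ : ℕ → ℕ → ℕ → Bool) (n k : ℕ) : frogConfig ξ n k ≤ 2 ^ n := by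
  induction n generalizing k with
  | zero => by_cases hk : k = 0 <;> simp [frogConfig, hk]
  | succ n ih => exact (frogStep_le Nat.one_le_two_pow ih _ k).trans_eq (pow_succ' 2 n).symm

/-- The invariant of the modified model preserved by `frogStep`. -/
structure IsAdmissible (c : ℕ → ℕ) : Prop where
  one_le_zero : 1 ≤ c 0
  eq_zero_of_zero_eq_one : c 0 = 1 → ∀ k ≠ 0, c k = 0

lemma IsAdmissible.frogStep {c : ℕ → ℕ} (hc : IsAdmissible c) (ξ : ℕ → ℕ → Bool) :
    IsAdmissible (frogStep c ξ) := by
  have h0 := jumpCount_true_add_false c ξ 0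
  have h1 := jumpCount_le c ξ 1 true
  have := hc.one_le_zero
  constructor
  · rw [frogStep_apply]
    split_ifs <;> omega
  · intro h k hk
    rw [frogStep_apply, if_pos rfl, zero_add] at h
    rw [frogStep_apply, if_neg hk]
    split_ifs at h ⊢
    · omega
    · have hzero := hc.eq_zero_of_zero_eq_one (by omega)
      have := (jumpCount_le c ξ (k + 1) true).trans_eq (hzero _ k.succ_ne_zero)
      have := (jumpCount_le c ξ k false).trans_eq (hzero k hk)
      omega

lemma isAdmissible_frogConfig (ξ : ℕ → ℕ → ℕ → Bool) (n : ℕ) :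
    IsAdmissible (frogConfig ξ n) := by
  induction n with
  | zero => exact ⟨by simp [frogConfig], fun _ k hk => by simp [frogConfig, hk]⟩
  | succ n ih => exact ih.frogStep (ξ n)

lemma frogConfig_congr {ξ ξ' : ℕ → ℕ → ℕ → Bool} {n l : ℕ}
    (h : ∀ t < n, ∀ m ≤ n + l, ∀ j < 2 ^ t, ξ t m j = ξ' t m j) :
    frogConfig ξ n l = frogConfig ξ' n l := by
  induction n generalizing l with
  | zero => rfl
  | succ n ih =>
    refine frogStep_congr (fun m hm => ih fun t ht m' hm' j hj => h t (by omega) m' (by omega) j hj)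
      fun m hm j hj => h n (by omega) m (by omega) j ?_
    exact hj.trans_le (frogConfig_le_two_pow ξ n m)

section Coins

variable {Ω : Type*} {ξ : ℕ → ℕ → ℕ → Ω → Bool}

def coinsOn (ξ : ℕ → ℕ → ℕ → Ω → Bool) (I : Finset (ℕ × ℕ × ℕ)) (ω : Ω) : I → Bool :=
  fun i => ξ i.1.1 i.1.2.1 i.1.2.2 ω

def extendCoins (I : Finset (ℕ × ℕ × ℕ)) (x : I → Bool) (t m j : ℕ) : Bool :=
  if h : (t, m, j) ∈ I then x ⟨(t, m, j), h⟩ else false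

lemma extendCoins_coinsOn {I : Finset (ℕ × ℕ × ℕ)} {t m j : ℕ} (h : (t, m, j) ∈ I) (ω : Ω) :
    extendCoins I (coinsOn ξ I ω) t m j = ξ t m j ω := by
  simp [extendCoins, coinsOn, h]

/-- The earlier coins on which levels `≤ k + 1` at time `n` depend: levels grow by at most one per
step, and at most `2 ^ t` frogs are active on a level at time `t`. -/
def pastWindow (n k : ℕ) : Finset (ℕ × ℕ × ℕ) :=
  range n ×ˢ range (n + k + 2) ×ˢ range (2 ^ n)

/-- The coins of time `n` on which level `k` at time `n + 1` depends. -/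
def presentWindow (n k : ℕ) : Finset (ℕ × ℕ × ℕ) :=
  {n} ×ˢ range (k + 2) ×ˢ range (2 ^ n)

lemma disjoint_pastWindow_presentWindow (n k : ℕ) :
    Disjoint (pastWindow n k) (presentWindow n k) := by
  rw [disjoint_left]
  rintro ⟨t, m, j⟩ h h'
  simp only [pastWindow, presentWindow, mem_product, mem_range, mem_singleton] at h h'
  omega

lemma frogConfig_eq_extendCoins {n k l : ℕ} (hl : l ≤ k + 1) (ω : Ω) :
    frogConfig (ξ · · · ω) n l = frogConfig (extendCoins _ (coinsOn ξ (pastWindow n k) ω)) n l :=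
  frogConfig_congr fun t ht m hm j hj => (extendCoins_coinsOn (by
    simp only [pastWindow, mem_product, mem_range]
    exact ⟨ht, by omega, hj.trans_le (Nat.pow_le_pow_right two_pos ht.le)⟩) ω).symm

lemma frogStep_frogConfig_eq_extendCoins (n k : ℕ) (ω' ω : Ω) :
    frogStep (frogConfig (ξ · · · ω') n) (ξ n · · ω) k =
      frogStep (frogConfig (extendCoins _ (coinsOn ξ (pastWindow n k) ω')) n)
        (extendCoins _ (coinsOn ξ (presentWindow n k) ω) n) k := by
  refine frogStep_congr (fun l hl => frogConfig_eq_extendCoins hl ω') fun l hl j hj => ?_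
  refine (extendCoins_coinsOn ?_ ω).symm
  simp only [presentWindow, mem_product, mem_singleton, mem_range, true_and]
  exact ⟨by omega, hj.trans_le (frogConfig_le_two_pow _ n l)⟩

/-- All `a` frogs at the maximum jump left at time `n`, so that the maximum retreats. -/
def maxRetreats (ξ : ℕ → ℕ → ℕ → Ω → Bool) (n a : ℕ) : Set Ω :=
  ⋂ j ∈ range a, {ω | ξ n 0 j ω = false}

lemma maxRetreats_eq_biInter {n a : ℕ} {b : ℕ × ℕ × ℕ → Bool} (hb : ∀ j, b (n, 0, j) = false) :
    maxRetreats ξ n a =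
      ⋂ i ∈ (range a).image fun j => (n, 0, j), {ω | ξ i.1 i.2.1 i.2.2 ω = b i} := by
  simp [maxRetreats, hb]

lemma mem_maxRetreats_iff {v : ℕ → ℕ} {n : ℕ} {ω : Ω} :
    ω ∈ maxRetreats ξ n (v 0) ↔ jumpCount v (ξ n · · ω) 0 true = 0 := by
  simp [maxRetreats, jumpCount_true_eq_zero_iff]

lemma frogStep_of_mem_maxRetreats {v : ℕ → ℕ} {n k : ℕ} {ω : Ω}
    (h : ω ∈ maxRetreats ξ n (v 0)) :
    frogStep v (ξ n · · ω) k =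
      jumpCount v (ξ n · · ω) (k + 1) true + jumpCount v (ξ n · · ω) k false := by
  rw [frogStep_apply, if_neg (by rw [mem_maxRetreats_iff.1 h]; exact lt_irrefl 0)]

lemma frogStep_of_notMem_maxRetreats {v : ℕ → ℕ} {n k : ℕ} {ω : Ω}
    (h : ω ∉ maxRetreats ξ n (v 0)) :
    frogStep v (ξ n · · ω) k = if k = 0 then jumpCount v (ξ n · · ω) 0 true + 1
      else jumpCount v (ξ n · · ω) k true + jumpCount v (ξ n · · ω) (k - 1) false := by
  rw [frogStep_apply, if_pos (Nat.pos_of_ne_zero (mt mem_maxRetreats_iff.2 h))]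

lemma jumpCount_coins_eq_sum (v : ℕ → ℕ) (n l : ℕ) (b : Bool) (ω : Ω) :
    (jumpCount v (ξ n · · ω) l b : ℝ≥0∞) =
      ∑ j ∈ range (v l), {ω | ξ n l j ω = b}.indicator 1 ω := by
  rw [jumpCount, card_filter]
  push_cast
  exact sum_congr rfl fun j _ => by simp [Set.indicator_apply]

end Coins

section Measure

variable {Ω : Type*} [MeasurableSpace Ω] {P : Measure Ω} {ξ : ℕ → ℕ → ℕ → Ω → Bool} {p : ℝ}

lemma measurable_coinsOn (hξ : ∀ t l j, Measurable (ξ t l j)) (I : Finset (ℕ × ℕ × ℕ)) :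
    Measurable (coinsOn ξ I) :=
  measurable_pi_lambda _ fun _ => hξ _ _ _

lemma measurable_frogConfig (hξ : ∀ t l j, Measurable (ξ t l j)) (n l : ℕ) :
    Measurable fun ω => (frogConfig (ξ · · · ω) n l : ℝ≥0∞) := by
  simp_rw [frogConfig_eq_extendCoins (k := l) (Nat.le_succ l)]
  exact (measurable_of_finite fun x : pastWindow n l → Bool =>
    (frogConfig (extendCoins _ x) n l : ℝ≥0∞)).comp (measurable_coinsOn hξ _)

/-- The configuration at time `n` is a function of the coins in `pastWindow`, which are
independent of those in `presentWindow` used by the next step; so it can be frozen while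
integrating over the latter. -/
lemma lintegral_frogConfig_succ [IsFiniteMeasure P] (hc : IsFrogCoins P ξ p) (n k : ℕ) :
    ∫⁻ ω, (frogConfig (ξ · · · ω) (n + 1) k : ℝ≥0∞) ∂P =
      ∫⁻ ω', ∫⁻ ω, (frogStep (frogConfig (ξ · · · ω') n) (ξ n · · ω) k : ℝ≥0∞) ∂P ∂P := by
  simp only [frogConfig, frogStep_frogConfig_eq_extendCoins]
  exact (hc.indep.indepFun_finset _ _ (disjoint_pastWindow_presentWindow n k)
    fun i => hc.meas _ _ _).lintegral_comp_eq_lintegral_lintegral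
    (measurable_coinsOn hc.meas _) (measurable_coinsOn hc.meas _) (g := fun x y =>
      (frogStep (frogConfig (extendCoins _ x) n) (extendCoins _ y n) k : ℝ≥0∞))
    (measurable_of_finite _)

lemma measurableSet_coin (hξ : ∀ t l j, Measurable (ξ t l j)) (t l j : ℕ) (b : Bool) :
    MeasurableSet {ω | ξ t l j ω = b} :=
  hξ t l j (measurableSet_singleton b)

lemma measurableSet_maxRetreats (hξ : ∀ t l j, Measurable (ξ t l j)) (n a : ℕ) :
    MeasurableSet (maxRetreats ξ n a) :=
  .biInter (countable_toSet _) fun j _ => measurableSet_coin hξ n 0 j false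

lemma measurable_jumpCount (hξ : ∀ t l j, Measurable (ξ t l j)) (v : ℕ → ℕ) (n l : ℕ)
    (b : Bool) : Measurable fun ω => (jumpCount v (ξ n · · ω) l b : ℝ≥0∞) := by
  simp_rw [jumpCount_coins_eq_sum]
  exact Finset.measurable_sum _ fun j _ => measurable_one.indicator (measurableSet_coin hξ n l j b)

lemma setLIntegral_jumpCount (hξ : ∀ t l j, Measurable (ξ t l j)) (v : ℕ → ℕ) (n l : ℕ)
    (b : Bool) (E : Set Ω) :
    ∫⁻ ω in E, (jumpCount v (ξ n · · ω) l b : ℝ≥0∞) ∂P =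
      ∑ j ∈ range (v l), P ({ω | ξ n l j ω = b} ∩ E) := by
  simp_rw [jumpCount_coins_eq_sum]
  rw [lintegral_finsetSum _ fun j _ => measurable_one.indicator (measurableSet_coin hξ n l j b)]
  refine sum_congr rfl fun j _ => ?_
  rw [lintegral_indicator_one (measurableSet_coin hξ n l j b),
    Measure.restrict_apply (measurableSet_coin hξ n l j b)]

lemma setLIntegral_frogStep_maxRetreats (hξ : ∀ t l j, Measurable (ξ t l j)) (v : ℕ → ℕ)
    (n k : ℕ) :
    ∫⁻ ω in maxRetreats ξ n (v 0), (frogStep v (ξ n · · ω) k : ℝ≥0∞) ∂P =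
      ∑ j ∈ range (v (k + 1)), P ({ω | ξ n (k + 1) j ω = true} ∩ maxRetreats ξ n (v 0)) +
        ∑ j ∈ range (v k), P ({ω | ξ n k j ω = false} ∩ maxRetreats ξ n (v 0)) := by
  rw [setLIntegral_congr_fun (measurableSet_maxRetreats hξ n _) fun ω h => by
      rw [frogStep_of_mem_maxRetreats h, Nat.cast_add],
    lintegral_add_left (measurable_jumpCount hξ ..), setLIntegral_jumpCount hξ,
    setLIntegral_jumpCount hξ]

lemma setLIntegral_frogStep_zero_compl (hξ : ∀ t l j, Measurable (ξ t l j)) (v : ℕ → ℕ)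
    (n : ℕ) :
    ∫⁻ ω in (maxRetreats ξ n (v 0))ᶜ, (frogStep v (ξ n · · ω) 0 : ℝ≥0∞) ∂P =
      ∑ j ∈ range (v 0), P ({ω | ξ n 0 j ω = true} ∩ (maxRetreats ξ n (v 0))ᶜ) +
        P (maxRetreats ξ n (v 0))ᶜ := by
  rw [setLIntegral_congr_fun (measurableSet_maxRetreats hξ n _).compl fun ω h => by
      rw [frogStep_of_notMem_maxRetreats h, if_pos rfl, Nat.cast_add, Nat.cast_one],
    lintegral_add_left (measurable_jumpCount hξ ..), setLIntegral_jumpCount hξ,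
    setLIntegral_const, one_mul]

lemma setLIntegral_frogStep_succ_compl (hξ : ∀ t l j, Measurable (ξ t l j)) (v : ℕ → ℕ)
    (n k : ℕ) :
    ∫⁻ ω in (maxRetreats ξ n (v 0))ᶜ, (frogStep v (ξ n · · ω) (k + 1) : ℝ≥0∞) ∂P =
      ∑ j ∈ range (v (k + 1)), P ({ω | ξ n (k + 1) j ω = true} ∩ (maxRetreats ξ n (v 0))ᶜ) +
        ∑ j ∈ range (v k), P ({ω | ξ n k j ω = false} ∩ (maxRetreats ξ n (v 0))ᶜ) := by
  rw [setLIntegral_congr_fun (measurableSet_maxRetreats hξ n _).compl fun ω h => by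
      rw [frogStep_of_notMem_maxRetreats h, if_neg k.succ_ne_zero, Nat.add_sub_cancel,
        Nat.cast_add],
    lintegral_add_left (measurable_jumpCount hξ ..), setLIntegral_jumpCount hξ,
    setLIntegral_jumpCount hξ]

lemma _root_.IsFrogCoins.measure_biInter (hc : IsFrogCoins P ξ p) (s : Finset (ℕ × ℕ × ℕ))
    (b : ℕ × ℕ × ℕ → Bool) :
    P (⋂ i ∈ s, {ω | ξ i.1 i.2.1 i.2.2 ω = b i}) = ∏ i ∈ s, P {ω | ξ i.1 i.2.1 i.2.2 ω = b i} :=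
  hc.indep.measure_inter_preimage_eq_mul s (sets := fun i => {b i})
    fun _ _ => measurableSet_singleton _

lemma measure_coin_inter_maxRetreats (hc : IsFrogCoins P ξ p) {l : ℕ} (hl : l ≠ 0)
    (n a j : ℕ) (b : Bool) :
    P ({ω | ξ n l j ω = b} ∩ maxRetreats ξ n a) =
      P {ω | ξ n l j ω = b} * P (maxRetreats ξ n a) := by
  let b' : ℕ × ℕ × ℕ → Bool := fun i => if i.2.1 = 0 then false else b
  have hj : (n, l, j) ∉ (range a).image fun j => (n, 0, j) := by simp [Ne.symm hl]
  have hset : {ω | ξ n l j ω = b} ∩ maxRetreats ξ n a =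
      ⋂ i ∈ insert (n, l, j) ((range a).image fun j => (n, 0, j)),
        {ω | ξ i.1 i.2.1 i.2.2 ω = b' i} := by
    rw [set_biInter_insert, ← maxRetreats_eq_biInter fun _ => rfl]
    simp [b', hl]
  rw [hset, hc.measure_biInter, prod_insert hj, ← hc.measure_biInter,
    ← maxRetreats_eq_biInter fun _ => rfl]
  simp [b', hl]

lemma sum_measure_coin_inter_le {n l : ℕ} {b : Bool} {r : ℝ≥0∞}
    (hr : ∀ j, P {ω | ξ n l j ω = b} = r) (m : ℕ) (E : Set Ω) :
    ∑ j ∈ range m, P ({ω | ξ n l j ω = b} ∩ E) ≤ r * m := by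
  calc ∑ j ∈ range m, P ({ω | ξ n l j ω = b} ∩ E)
      ≤ ∑ j ∈ range m, P {ω | ξ n l j ω = b} :=
        sum_le_sum fun j _ => measure_mono Set.inter_subset_left
    _ = r * m := by simp [hr, mul_comm]

variable [IsProbabilityMeasure P]

lemma _root_.IsFrogCoins.measure_false (hc : IsFrogCoins P ξ p) (hp : 0 ≤ p) (t l j : ℕ) :
    P {ω | ξ t l j ω = false} = ENNReal.ofReal (1 - p) := by
  have h : {ω | ξ t l j ω = false} = {ω | ξ t l j ω = true}ᶜ := by ext; simp
  rw [h, prob_compl_eq_one_sub (measurableSet_coin hc.meas t l j true), hc.prob_true,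
    ENNReal.ofReal_sub _ hp, ENNReal.ofReal_one]

lemma measure_maxRetreats (hc : IsFrogCoins P ξ p) (hp : 0 ≤ p) (n a : ℕ) :
    P (maxRetreats ξ n a) = ENNReal.ofReal (1 - p) ^ a := by
  rw [maxRetreats_eq_biInter (b := fun _ => false) fun _ => rfl, hc.measure_biInter,
    prod_image fun _ _ _ _ h => by simpa using h]
  simp [hc.measure_false hp]

lemma sum_measure_true_inter_maxRetreats_le (hc : IsFrogCoins P ξ p) (hp : 0 ≤ p)
    {v : ℕ → ℕ} (hv : IsAdmissible v) {l : ℕ} (hl : l ≠ 0) (n : ℕ) :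
    ∑ j ∈ range (v l), P ({ω | ξ n l j ω = true} ∩ maxRetreats ξ n (v 0)) ≤
      ENNReal.ofReal p * ENNReal.ofReal (1 - p) ^ 2 * v l := by
  simp only [measure_coin_inter_maxRetreats hc hl, hc.prob_true,
    measure_maxRetreats hc hp, sum_const, card_range, nsmul_eq_mul]
  rcases hv.one_le_zero.eq_or_lt with h | h
  · simp [hv.eq_zero_of_zero_eq_one h.symm l hl]
  · rw [mul_comm]
    have hq : ENNReal.ofReal (1 - p) ≤ 1 := ENNReal.ofReal_le_one.2 (by linarith)
    gcongr _ * ?_ * _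
    exact pow_le_pow_right_of_le_one' hq h

lemma sum_false_inter_add_sum_true_inter_compl_le (hc : IsFrogCoins P ξ p) (hp : 1 / 2 ≤ p)
    {l : ℕ} (hl : l ≠ 0) (v : ℕ → ℕ) (n : ℕ) :
    ∑ j ∈ range (v l), P ({ω | ξ n l j ω = false} ∩ maxRetreats ξ n (v 0)) +
        ∑ j ∈ range (v l), P ({ω | ξ n l j ω = true} ∩ (maxRetreats ξ n (v 0))ᶜ) ≤
      ENNReal.ofReal p * v l := by
  rw [← sum_add_distrib]
  refine (sum_le_card_nsmul _ _ (ENNReal.ofReal p) fun j _ => ?_).trans (by simp [mul_comm])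
  calc P ({ω | ξ n l j ω = false} ∩ maxRetreats ξ n (v 0)) +
        P ({ω | ξ n l j ω = true} ∩ (maxRetreats ξ n (v 0))ᶜ)
      ≤ P ({ω | ξ n l j ω = true} ∩ maxRetreats ξ n (v 0)) +
        P ({ω | ξ n l j ω = true} ∩ (maxRetreats ξ n (v 0))ᶜ) := by
        rw [measure_coin_inter_maxRetreats hc hl, measure_coin_inter_maxRetreats hc hl,
          hc.measure_false (by linarith), hc.prob_true]
        gcongr
        linarith
    _ = ENNReal.ofReal p := by
        rw [← Set.sdiff_eq, measure_inter_add_sdiff _ (measurableSet_maxRetreats hc.meas n _),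
          hc.prob_true]

lemma sum_false_inter_maxRetreats_add_measure_compl_le (hc : IsFrogCoins P ξ p)
    (hp : 1 / 2 ≤ p) (v : ℕ → ℕ) (n : ℕ) :
    ∑ j ∈ range (v 0), P ({ω | ξ n 0 j ω = false} ∩ maxRetreats ξ n (v 0)) +
        P (maxRetreats ξ n (v 0))ᶜ ≤ 1 + ENNReal.ofReal (1 - p) ^ 2 := by
  have hq : 2 * ENNReal.ofReal (1 - p) ≤ 1 := by
    rw [← ENNReal.ofReal_ofNat 2, ← ENNReal.ofReal_mul zero_le_two]
    exact ENNReal.ofReal_le_one.2 (by linarith)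
  have hB : ∀ j ∈ range (v 0),
      {ω | ξ n 0 j ω = false} ∩ maxRetreats ξ n (v 0) = maxRetreats ξ n (v 0) :=
    fun j hj => Set.inter_eq_right.2 (Set.iInter₂_subset j hj)
  rw [sum_congr rfl fun j hj => by rw [hB j hj], sum_const, card_range, nsmul_eq_mul]
  calc v 0 * P (maxRetreats ξ n (v 0)) + P (maxRetreats ξ n (v 0))ᶜ
      ≤ P (maxRetreats ξ n (v 0)) + ENNReal.ofReal (1 - p) ^ 2 + P (maxRetreats ξ n (v 0))ᶜ := by
        rw [measure_maxRetreats hc (by linarith)]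
        gcongr
        exact ENNReal.natCast_mul_pow_le hq _
    _ = 1 + ENNReal.ofReal (1 - p) ^ 2 := by
        rw [add_right_comm, prob_add_prob_compl (measurableSet_maxRetreats hc.meas n _)]

lemma lintegral_frogStep_le (hc : IsFrogCoins P ξ p) (hp : 1 / 2 ≤ p) {v : ℕ → ℕ}
    (hv : IsAdmissible v) (n k : ℕ) :
    ∫⁻ ω, (frogStep v (ξ n · · ω) k : ℝ≥0∞) ∂P ≤
      ENNReal.ofReal p * v k +
        (if k = 0 then 1 + ENNReal.ofReal (1 - p) ^ 2 else ENNReal.ofReal (1 - p) * v (k - 1)) +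
        ENNReal.ofReal p * ENNReal.ofReal (1 - p) ^ 2 * v (k + 1) := by
  have hup := sum_measure_true_inter_maxRetreats_le hc (by linarith) hv k.succ_ne_zero n
  rw [← lintegral_add_compl _ (measurableSet_maxRetreats hc.meas n (v 0)),
    setLIntegral_frogStep_maxRetreats hc.meas]
  cases k with
  | zero =>
    rw [setLIntegral_frogStep_zero_compl hc.meas, if_pos rfl]
    have hright := sum_measure_coin_inter_le (hc.prob_true n 0) (v 0) (maxRetreats ξ n (v 0))ᶜ
    have hleft := sum_false_inter_maxRetreats_add_measure_compl_le hc hp v n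
    calc _ = ∑ j ∈ range (v 0), P ({ω | ξ n 0 j ω = true} ∩ (maxRetreats ξ n (v 0))ᶜ) +
          (∑ j ∈ range (v 0), P ({ω | ξ n 0 j ω = false} ∩ maxRetreats ξ n (v 0)) +
            P (maxRetreats ξ n (v 0))ᶜ) +
          ∑ j ∈ range (v 1), P ({ω | ξ n 1 j ω = true} ∩ maxRetreats ξ n (v 0)) := by ring
      _ ≤ _ := add_le_add (add_le_add hright hleft) hup
  | succ k =>
    rw [setLIntegral_frogStep_succ_compl hc.meas, if_neg k.succ_ne_zero, Nat.add_sub_cancel]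
    have hstay := sum_false_inter_add_sum_true_inter_compl_le hc hp k.succ_ne_zero v n
    have hdown := sum_measure_coin_inter_le (hc.measure_false (by linarith) n k) (v k)
      (maxRetreats ξ n (v 0))ᶜ
    calc _ = (∑ j ∈ range (v (k + 1)),
            P ({ω | ξ n (k + 1) j ω = false} ∩ maxRetreats ξ n (v 0)) +
          ∑ j ∈ range (v (k + 1)),
            P ({ω | ξ n (k + 1) j ω = true} ∩ (maxRetreats ξ n (v 0))ᶜ)) +
          ∑ j ∈ range (v k), P ({ω | ξ n k j ω = false} ∩ (maxRetreats ξ n (v 0))ᶜ) +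
          ∑ j ∈ range (v (k + 2)),
            P ({ω | ξ n (k + 2) j ω = true} ∩ maxRetreats ξ n (v 0)) := by ring
      _ ≤ _ := add_le_add (add_le_add hstay hdown) hup

/-- `E[a_n(k)]` -/
noncomputable def meanFrogConfig (P : Measure Ω) (ξ : ℕ → ℕ → ℕ → Ω → Bool) (n k : ℕ) : ℝ≥0∞ :=
  ∫⁻ ω, (frogConfig (ξ · · · ω) n k : ℝ≥0∞) ∂P

lemma meanFrogConfig_zero (P : Measure Ω) [IsProbabilityMeasure P] (ξ : ℕ → ℕ → ℕ → Ω → Bool)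
    (k : ℕ) : meanFrogConfig P ξ 0 k = if k = 0 then 1 else 0 := by
  split_ifs with hk <;> simp [meanFrogConfig, frogConfig, hk]

lemma meanFrogConfig_succ_le (hc : IsFrogCoins P ξ p) (hp : 1 / 2 ≤ p) (n k : ℕ) :
    meanFrogConfig P ξ (n + 1) k ≤
      ENNReal.ofReal p * meanFrogConfig P ξ n k +
        (if k = 0 then 1 + ENNReal.ofReal (1 - p) ^ 2
          else ENNReal.ofReal (1 - p) * meanFrogConfig P ξ n (k - 1)) +
        ENNReal.ofReal p * ENNReal.ofReal (1 - p) ^ 2 * meanFrogConfig P ξ n (k + 1) := by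
  have hm := measurable_frogConfig hc.meas n
  calc meanFrogConfig P ξ (n + 1) k
      = ∫⁻ ω', ∫⁻ ω, (frogStep (frogConfig (ξ · · · ω') n) (ξ n · · ω) k : ℝ≥0∞) ∂P ∂P :=
        lintegral_frogConfig_succ hc n k
    _ ≤ ∫⁻ ω', (ENNReal.ofReal p * frogConfig (ξ · · · ω') n k +
          (if k = 0 then 1 + ENNReal.ofReal (1 - p) ^ 2
            else ENNReal.ofReal (1 - p) * frogConfig (ξ · · · ω') n (k - 1)) +
          ENNReal.ofReal p * ENNReal.ofReal (1 - p) ^ 2 * frogConfig (ξ · · · ω') n (k + 1)) ∂P :=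
        lintegral_mono fun ω' => lintegral_frogStep_le hc hp (isAdmissible_frogConfig _ n) n k
    _ = _ := by
        rw [lintegral_add_right _ ((hm _).const_mul _), lintegral_add_left ((hm _).const_mul _),
          lintegral_const_mul _ (hm _), lintegral_const_mul _ (hm _)]
        split_ifs
        · rw [lintegral_const, measure_univ, mul_one]
          rfl
        · rw [lintegral_const_mul _ (hm _)]
          rfl

end Measure

lemma mul_pow_mul_le_of_recursion {p q : ℝ≥0∞} (hpq : p + q = 1) {u : ℕ → ℕ → ℝ≥0∞}
    (h0 : ∀ k, u 0 k = if k = 0 then 1 else 0)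
    (hsucc : ∀ n k, u (n + 1) k ≤
      p * u n k + (if k = 0 then 1 + q ^ 2 else q * u n (k - 1)) + p * q ^ 2 * u n (k + 1))
    (n k : ℕ) : p * q * p ^ k * u n k ≤ 1 + q ^ 2 := by
  have hp1 : p ≤ 1 := hpq ▸ le_self_add
  have hq1 : q ≤ 1 := hpq ▸ le_add_self
  induction n generalizing k with
  | zero =>
    calc p * q * p ^ k * u 0 k ≤ 1 * 1 * 1 * (if k = 0 then 1 else 0) := by
          gcongr
          · exact pow_le_one₀ zero_le hp1
          · exact (h0 k).le
      _ ≤ 1 + q ^ 2 := by split_ifs <;> simp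
  | succ n ih =>
    have hmid : p ^ k * (if k = 0 then 1 + q ^ 2 else q * u n (k - 1)) ≤ 1 + q ^ 2 := by
      cases k with
      | zero => simp
      | succ k =>
        rw [if_neg k.succ_ne_zero, Nat.add_sub_cancel, pow_succ]
        exact (le_of_eq (by ring)).trans (ih k)
    calc p * q * p ^ k * u (n + 1) k
        ≤ p * q * p ^ k * (p * u n k + (if k = 0 then 1 + q ^ 2 else q * u n (k - 1)) +
            p * q ^ 2 * u n (k + 1)) := by gcongr; exact hsucc n k
      _ = p * (p * q * p ^ k * u n k) + p * q * (p ^ k * (if k = 0 then 1 + q ^ 2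
            else q * u n (k - 1))) + q ^ 2 * (p * q * p ^ (k + 1) * u n (k + 1)) := by ring
      _ ≤ p * (1 + q ^ 2) + p * q * (1 + q ^ 2) + q ^ 2 * (1 + q ^ 2) := by
          gcongr
          exacts [ih k, ih (k + 1)]
      _ = (p + q * (p + q)) * (1 + q ^ 2) := by ring
      _ = 1 + q ^ 2 := by rw [hpq, mul_one, hpq, one_mul]

lemma one_add_sq_div_le {p : ℝ} (hp : 1 / 2 < p) (hp1 : p < 1) (k : ℕ) :
    (1 + (1 - p) ^ 2) / (p * (1 - p) * p ^ k) ≤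
      (2 - p) * p / ((1 - p) * (2 * p - 1) * p ^ k) := by
  have hp0 : 0 < p := by linarith
  have hq0 : 0 < 1 - p := by linarith
  -- the difference of the two sides is `(1 - p) (3 p² - 4 p + 2)`
  have key : (1 + (1 - p) ^ 2) * (2 * p - 1) ≤ (2 - p) * p ^ 2 := by
    nlinarith [mul_nonneg hq0.le (by nlinarith [sq_nonneg (3 * p - 2)] : 0 ≤ 3 * p ^ 2 - 4 * p + 2)]
  rw [div_le_div_iff₀ (by positivity) (mul_pos (mul_pos hq0 (by linarith)) (by positivity))]
  calc (1 + (1 - p) ^ 2) * ((1 - p) * (2 * p - 1) * p ^ k)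
      = (1 + (1 - p) ^ 2) * (2 * p - 1) * ((1 - p) * p ^ k) := by ring
    _ ≤ (2 - p) * p ^ 2 * ((1 - p) * p ^ k) := by gcongr
    _ = (2 - p) * p * (p * (1 - p) * p ^ k) := by ring

end FrogModel

open FrogModel in
/-- **Lemma 6, refined form.**
For `1/2 < p < 1` and all `n, k ∈ ℕ₀`, the expected number `E[a_n(k)]` of active frogs at
distance `2k` below the maximum in the modified frog model is at most
`(2 - p)·p / ((1 - p)·(2p - 1)·p^k)`. -/
theorem modified_frog_expected_level_bound
    {Ω : Type*} [MeasurableSpace Ω] (P : Measure Ω) [IsProbabilityMeasure P]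
    (ξ : ℕ → ℕ → ℕ → Ω → Bool) (p : ℝ) (hcoins : IsFrogCoins P ξ p)
    (hp : 1 / 2 < p) (hp1 : p < 1) (n k : ℕ) :
    ∫⁻ ω, (frogConfig (fun t k j => ξ t k j ω) n k : ℝ≥0∞) ∂P
      ≤ ENNReal.ofReal ((2 - p) * p / ((1 - p) * (2 * p - 1) * p ^ k)) := by
  have hp0 : 0 ≤ p := by linarith
  have hq0 : 0 ≤ 1 - p := by linarith
  have hpq : ENNReal.ofReal p + ENNReal.ofReal (1 - p) = 1 := by
    rw [← ENNReal.ofReal_add hp0 hq0, add_sub_cancel, ENNReal.ofReal_one]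
  have hrec : ENNReal.ofReal (p * (1 - p) * p ^ k) * meanFrogConfig P ξ n k ≤
      ENNReal.ofReal (1 + (1 - p) ^ 2) := by
    rw [ENNReal.ofReal_mul (by positivity), ENNReal.ofReal_mul hp0, ENNReal.ofReal_pow hp0,
      ENNReal.ofReal_add zero_le_one (by positivity), ENNReal.ofReal_one, ENNReal.ofReal_pow hq0]
    exact mul_pow_mul_le_of_recursion hpq (meanFrogConfig_zero P ξ)
      (meanFrogConfig_succ_le hcoins hp.le) n k
  exact (ENNReal.le_ofReal_div_of_ofReal_mul_le (by positivity) hrec).trans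
    (ENNReal.ofReal_le_ofReal (one_add_sq_div_le hp hp1 k))
end

section
/- In the frog model with drift parameter p ∈ [1/2, 1], almost surely S_{T_i}^i / T_i converges to 2p − 1 as i → ∞ along the non-negative integers, where T_i is the activation time of frog i and S_{T_i}^i is the value at time T_i of the random walk attached to frog i. -/
open MeasureTheory ProbabilityTheory Filter
open scoped ENNReal NNReal Topology

/-!
Frog `i` walks with independent `±1` steps of mean `2p - 1`, so by Hoeffding's inequality
`|S^i_n - (2p - 1) n| ≥ ε n` has probability at most `2 e^{-ε² n / 2}`. Summing over `n ≥ i`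
and then over `i`, Borel–Cantelli shows that almost surely, for all large `i`, `S^i_n` is within
`ε n` of `(2p - 1) n` simultaneously for every `n ≥ i`. Activation spreads at speed at most one,
so `T_i ≥ i` and this applies at `n = T_i`.

If `p > 1/2`, the walk of frog `0` drifts to `+∞` and, moving by unit steps, visits every
`i ≥ 0`, so each `T_i` is finite. If `p = 1/2`, an infinite `T_i` has `toNat` equal to `0` and
the ratio is the junk value `0 / 0 = 0 = 2p - 1`.
-/

section Hoeffding

variable {Ω ι : Type*} [MeasurableSpace Ω] {P : Measure Ω} [IsProbabilityMeasure P]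

lemma measure_abs_sum_sub_ge_le_of_iIndepFun {Y : ι → Ω → ℝ} (hind : iIndepFun Y P)
    (hmeas : ∀ k, AEMeasurable (Y k) P) (hbd : ∀ k, ∀ᵐ ω ∂P, Y k ω ∈ Set.Icc (-1) 1)
    {v : ℝ} (hv : ∀ k, P[Y k] = v) (s : Finset ι) {ε : ℝ} (hε : 0 ≤ ε) :
    P {ω | ε * s.card ≤ |∑ k ∈ s, Y k ω - s.card * v|}
      ≤ ENNReal.ofReal (2 * Real.exp (-ε ^ 2 / 2) ^ s.card) := by
  have hsub : ∀ k ∈ s, HasSubgaussianMGF (fun ω ↦ Y k ω - v) 1 P := by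
    intro k _
    have := hasSubgaussianMGF_of_mem_Icc (hmeas k) (hbd k)
    rw [hv k] at this
    convert this
    norm_num
  have hsum : HasSubgaussianMGF (fun ω ↦ ∑ k ∈ s, Y k ω - s.card * v) s.card P := by
    have := HasSubgaussianMGF.sum_of_iIndepFun
      (hind.comp (fun _ x ↦ x - v) fun _ ↦ measurable_sub_const v) hsub
    simpa [Finset.sum_sub_distrib] using this
  have htail : ∀ Z : Ω → ℝ, HasSubgaussianMGF Z s.card P →
      P {ω | ε * s.card ≤ Z ω} ≤ ENNReal.ofReal (Real.exp (-ε ^ 2 / 2) ^ s.card) := by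
    intro Z hZ
    rw [← ofReal_measureReal]
    refine ENNReal.ofReal_le_ofReal ((hZ.measure_ge_le (by positivity)).trans_eq ?_)
    rw [← Real.exp_nat_mul]
    rcases eq_or_ne s.card 0 with h | h
    · simp [h]
    · congr 1; field_simp; push_cast; ring
  calc P {ω | ε * s.card ≤ |∑ k ∈ s, Y k ω - s.card * v|}
      ≤ P ({ω | ε * s.card ≤ ∑ k ∈ s, Y k ω - s.card * v}
          ∪ {ω | ε * s.card ≤ -(∑ k ∈ s, Y k ω - s.card * v)}) :=
        measure_mono fun _ h ↦ by simpa only [Set.mem_union, Set.mem_ofPred_eq] using le_abs.mp h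
    _ ≤ _ := (measure_union_le _ _).trans (add_le_add (htail _ hsum) (htail _ hsum.neg))
    _ = _ := by rw [← ENNReal.ofReal_add (by positivity) (by positivity), two_mul]

end Hoeffding

section BorelCantelli

variable {Ω : Type*} [MeasurableSpace Ω] {P : Measure Ω}

lemma ae_eventually_notMem_of_le_ofReal {E : ℕ → Set Ω} {f : ℕ → ℝ} (hf : Summable f)
    (h : ∀ n, P (E n) ≤ ENNReal.ofReal (f n)) : ∀ᵐ ω ∂P, ∀ᶠ n in atTop, ω ∉ E n :=
  ae_eventually_notMem (ne_top_of_le_ne_top hf.tsum_ofReal_ne_top (ENNReal.tsum_le_tsum h))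

lemma ae_eventually_forall_ge_notMem {E : ℕ → ℕ → Set Ω} {C r : ℝ} (hC : 0 ≤ C) (hr0 : 0 ≤ r)
    (hr1 : r < 1) (h : ∀ i n, P (E i n) ≤ ENNReal.ofReal (C * r ^ n)) :
    ∀ᵐ ω ∂P, ∀ᶠ i in atTop, ∀ n ≥ i, ω ∉ E i n := by
  have hunion : ∀ i, P (⋃ j, E i (i + j)) ≤ ENNReal.ofReal (C * r ^ i * (1 - r)⁻¹) := by
    intro i
    have hsum : HasSum (fun j ↦ C * r ^ (i + j)) (C * r ^ i * (1 - r)⁻¹) := by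
      simpa only [pow_add, mul_assoc] using
        (hasSum_geometric_of_lt_one hr0 hr1).mul_left (C * r ^ i)
    calc P (⋃ j, E i (i + j)) ≤ ∑' j, P (E i (i + j)) := measure_iUnion_le _
      _ ≤ ∑' j, ENNReal.ofReal (C * r ^ (i + j)) := ENNReal.tsum_le_tsum fun j ↦ h i (i + j)
      _ = ENNReal.ofReal (C * r ^ i * (1 - r)⁻¹) := by
        rw [← ENNReal.ofReal_tsum_of_nonneg (fun j ↦ by positivity) hsum.summable, hsum.tsum_eq]
  filter_upwards [ae_eventually_notMem_of_le_ofReal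
    (((summable_geometric_of_lt_one hr0 hr1).mul_left C).mul_right _) hunion] with ω hω
  filter_upwards [hω] with i hi n hn hmem
  obtain ⟨j, rfl⟩ := Nat.exists_eq_add_of_le hn
  exact hi (Set.mem_iUnion.mpr ⟨j, hmem⟩)

end BorelCantelli

lemma abs_le_of_abs_sub_le_one {f : ℕ → ℤ} (h0 : f 0 = 0) (hf : ∀ n, |f (n + 1) - f n| ≤ 1)
    (n : ℕ) : |f n| ≤ n := by
  induction n with
  | zero => simp [h0]
  | succ n ih =>
    obtain ⟨h1, h2⟩ := abs_le.mp (hf n)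
    obtain ⟨h3, h4⟩ := abs_le.mp ih
    rw [abs_le]
    push_cast
    constructor <;> linarith

lemma exists_eq_of_abs_sub_le_one {f : ℕ → ℤ} (hf : ∀ n, |f (n + 1) - f n| ≤ 1) {v : ℤ}
    {n : ℕ} (h0 : f 0 ≤ v) (hn : v ≤ f n) : ∃ k, f k = v := by
  induction n with
  | zero => exact ⟨0, le_antisymm h0 hn⟩
  | succ n ih =>
    by_cases h : v ≤ f n
    · exact ih h
    · have := abs_le.mp (hf n)
      exact ⟨n + 1, by omega⟩

lemma frogS_zero {Ω : Type*} (X : ℤ → ℕ → Ω → ℤ) (ω : Ω) (i : ℤ) : frogS X ω i 0 = 0 := by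
  simp [frogS]

lemma frogS_succ_sub {Ω : Type*} (X : ℤ → ℕ → Ω → ℤ) (ω : Ω) (i : ℤ) (n : ℕ) :
    frogS X ω i (n + 1) - frogS X ω i n = X i (n + 1) ω := by
  rw [frogS, frogS, Finset.sum_Icc_succ_top (Nat.le_add_left 1 n), add_sub_cancel_left]

lemma abs_frogS_succ_sub_le {Ω : Type*} {X : ℤ → ℕ → Ω → ℤ} {ω : Ω}
    (hX : ∀ j k, X j k ω = 1 ∨ X j k ω = -1) (i : ℤ) (n : ℕ) :
    |frogS X ω i (n + 1) - frogS X ω i n| ≤ 1 := by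
  rw [frogS_succ_sub]
  rcases hX i (n + 1) with h | h <;> simp [h]

section ActivationTime

variable {S : ℤ → ℕ → ℤ}

lemma hitTime_le {j i : ℤ} {n : ℕ} (h : j + S j n = i) : hitTime S j i ≤ n :=
  sInf_le ⟨n, rfl, h⟩

lemma natAbs_sub_le_hitTime {j : ℤ} (hS : ∀ n, |S j n| ≤ n) (i : ℤ) :
    ((i - j).natAbs : ℕ∞) ≤ hitTime S j i := by
  refine le_sInf ?_
  rintro t ⟨n, rfl, hn⟩
  have : (i - j).natAbs ≤ n := by
    have := hS n
    rw [show S j n = i - j by omega, Int.abs_eq_natAbs] at this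
    exact_mod_cast this
  exact_mod_cast this

lemma natAbs_le_frogT (hS : ∀ j n, |S j n| ≤ n) (i : ℤ) : (i.natAbs : ℕ∞) ≤ frogT S i := by
  refine le_sInf ?_
  rintro t ⟨m, c, hc0, hcm, rfl⟩
  have htele : i.natAbs ≤ ∑ l ∈ Finset.range m, (c (l + 1) - c l).natAbs := by
    rw [← hcm, ← sub_zero (c m), ← hc0, ← Finset.sum_range_sub c]
    exact Int.natAbs_sum_le _ _
  calc (i.natAbs : ℕ∞) ≤ ∑ l ∈ Finset.range m, ((c (l + 1) - c l).natAbs : ℕ∞) := by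
        exact_mod_cast htele
    _ ≤ ∑ l ∈ Finset.range m, hitTime S (c l) (c (l + 1)) :=
        Finset.sum_le_sum fun l _ ↦ natAbs_sub_le_hitTime (hS (c l)) _

lemma frogT_le_hitTime_zero (i : ℤ) : frogT S i ≤ hitTime S 0 i :=
  sInf_le ⟨1, fun l ↦ if l = 0 then 0 else i, by simp, by simp, by simp⟩

lemma frogT_ne_top_of_le (hS0 : S 0 0 = 0) (hS : ∀ n, |S 0 (n + 1) - S 0 n| ≤ 1) {i : ℤ}
    (hi : 0 ≤ i) {n : ℕ} (hn : i ≤ S 0 n) : frogT S i ≠ ⊤ := by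
  obtain ⟨k, hk⟩ := exists_eq_of_abs_sub_le_one hS (by rwa [hS0]) hn
  exact ne_top_of_le_ne_top (ENat.natCast_ne_top k)
    ((frogT_le_hitTime_zero i).trans (hitTime_le (by rw [zero_add, hk])))

lemma tendsto_div_frogT (hS0 : ∀ j, S j 0 = 0) (hS : ∀ j n, |S j (n + 1) - S j n| ≤ 1) {v : ℝ}
    (hdev : ∀ ε > 0, ∀ᶠ i : ℕ in atTop, ∀ n ≥ i, |(S i n : ℝ) - v * n| < ε * n)
    (htop : ∀ i : ℕ, frogT S i = ⊤ → v = 0) :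
    Tendsto (fun i : ℕ ↦ (S i (frogT S i).toNat : ℝ) / (frogT S i).toNat) atTop (𝓝 v) := by
  rw [Metric.tendsto_atTop]
  intro ε hε
  obtain ⟨I, hI⟩ := eventually_atTop.mp (hdev ε hε)
  refine ⟨max I 1, fun i hi ↦ ?_⟩
  by_cases hTi : frogT S i = ⊤
  · simp [hTi, hS0, htop i hTi, hε]
  · set t := (frogT S i).toNat
    have hit : i ≤ t := by
      have := ENat.toNat_le_toNat
        (natAbs_le_frogT (fun j ↦ abs_le_of_abs_sub_le_one (hS0 j) (hS j)) i) hTi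
      simpa using this
    have ht : (0 : ℝ) < t := by exact_mod_cast (le_of_max_le_right hi).trans hit
    rw [Real.dist_eq, div_sub' ht.ne', abs_div, abs_of_pos ht, div_lt_iff₀ ht, mul_comm (t : ℝ) v]
    exact hI i (le_of_max_le_left hi) t hit

end ActivationTime

namespace IsFrogModel

variable {Ω : Type*} [MeasurableSpace Ω] {P : Measure Ω} [IsProbabilityMeasure P]
  {X : ℤ → ℕ → Ω → ℤ} {p : ℝ}

lemma nonneg (h : IsFrogModel P X p) : 0 ≤ p := by
  have := h.prob_neg_one 0 0 ▸ prob_le_one (μ := P)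
  linarith [(ENNReal.ofReal_le_one).mp this]

lemma le_one (h : IsFrogModel P X p) : p ≤ 1 :=
  ENNReal.ofReal_le_one.mp (h.prob_one 0 0 ▸ prob_le_one)

lemma ae_step_eq_one_or_neg_one (h : IsFrogModel P X p) :
    ∀ᵐ ω ∂P, ∀ i k, X i k ω = 1 ∨ X i k ω = -1 := by
  simp only [ae_all_iff]
  intro i k
  have hdisj : Disjoint {ω | X i k ω = 1} {ω | X i k ω = -1} :=
    Set.disjoint_left.mpr fun ω h1 h2 ↦ by simp_all
  rw [ae_iff_prob_eq_one ((h.meas i k).eq_const 1 |>.or ((h.meas i k).eq_const (-1))),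
    Set.ofPred_or, measure_union hdisj (h.meas i k (measurableSet_singleton (-1))),
    h.prob_one, h.prob_neg_one, ← ENNReal.ofReal_add h.nonneg (by linarith [h.le_one])]
  norm_num

lemma integral_step (h : IsFrogModel P X p) (i : ℤ) (k : ℕ) :
    P[fun ω ↦ (X i k ω : ℝ)] = 2 * p - 1 := by
  have hmeas (a : ℤ) : MeasurableSet {ω | X i k ω = a} := h.meas i k (measurableSet_singleton a)
  have hae : (fun ω ↦ (X i k ω : ℝ)) =ᵐ[P] fun ω ↦
      {ω | X i k ω = 1}.indicator (1 : Ω → ℝ) ω - {ω | X i k ω = -1}.indicator 1 ω := by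
    filter_upwards [h.ae_step_eq_one_or_neg_one] with ω hω
    rcases hω i k with h1 | h1 <;> simp [Set.indicator, h1]
  rw [integral_congr_ae hae, integral_sub ((integrable_const 1).indicator (hmeas 1))
      ((integrable_const 1).indicator (hmeas (-1))),
    integral_indicator_one (hmeas 1), integral_indicator_one (hmeas (-1)), measureReal_def,
    measureReal_def, h.prob_one, h.prob_neg_one, ENNReal.toReal_ofReal h.nonneg,
    ENNReal.toReal_ofReal (by linarith [h.le_one])]
  ring

lemma measure_abs_frogS_sub_ge_le (h : IsFrogModel P X p) (i : ℤ) (n : ℕ) {ε : ℝ}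
    (hε : 0 ≤ ε) :
    P {ω | ε * n ≤ |(frogS X ω i n : ℝ) - (2 * p - 1) * n|}
      ≤ ENNReal.ofReal (2 * Real.exp (-ε ^ 2 / 2) ^ n) := by
  have hind : iIndepFun (fun k ω ↦ (X i k ω : ℝ)) P :=
    (h.indep.precomp (Prod.mk_right_injective i)).comp (fun _ ↦ Int.cast)
      fun _ ↦ measurable_from_top
  have hbd : ∀ k, ∀ᵐ ω ∂P, (X i k ω : ℝ) ∈ Set.Icc (-1) 1 := fun k ↦ by
    filter_upwards [h.ae_step_eq_one_or_neg_one] with ω hω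
    rcases hω i k with h1 | h1 <;> simp [h1]
  simpa [frogS, mul_comm] using measure_abs_sum_sub_ge_le_of_iIndepFun hind
    (fun k ↦ (measurable_from_top.comp (h.meas i k)).aemeasurable) hbd
    (h.integral_step i) (Finset.Icc 1 n) hε

lemma ae_eventually_abs_frogS_sub_lt (h : IsFrogModel P X p) (i : ℤ) {ε : ℝ} (hε : 0 < ε) :
    ∀ᵐ ω ∂P, ∀ᶠ n : ℕ in atTop, |(frogS X ω i n : ℝ) - (2 * p - 1) * n| < ε * n := by
  have hr : Real.exp (-ε ^ 2 / 2) < 1 := Real.exp_lt_one_iff.mpr (by nlinarith)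
  simpa only [Set.mem_ofPred_eq, not_le] using ae_eventually_notMem_of_le_ofReal
    ((summable_geometric_of_lt_one (Real.exp_pos _).le hr).mul_left 2)
    fun n ↦ h.measure_abs_frogS_sub_ge_le i n hε.le

lemma ae_eventually_forall_ge_abs_frogS_sub_lt (h : IsFrogModel P X p) :
    ∀ᵐ ω ∂P, ∀ ε > 0, ∀ᶠ i : ℕ in atTop, ∀ n ≥ i,
      |(frogS X ω i n : ℝ) - (2 * p - 1) * n| < ε * n := by
  have hm : ∀ m : ℕ, ∀ᵐ ω ∂P, ∀ᶠ i : ℕ in atTop, ∀ n ≥ i,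
      |(frogS X ω i n : ℝ) - (2 * p - 1) * n| < 1 / (m + 1) * n := by
    intro m
    have hε : (0 : ℝ) < 1 / (m + 1) := by positivity
    have hr : Real.exp (-(1 / (m + 1) : ℝ) ^ 2 / 2) < 1 := Real.exp_lt_one_iff.mpr (by nlinarith)
    simpa only [Set.mem_ofPred_eq, not_le] using ae_eventually_forall_ge_notMem zero_le_two
      (Real.exp_pos _).le hr fun i n ↦ h.measure_abs_frogS_sub_ge_le i n hε.le
  filter_upwards [ae_all_iff.mpr hm] with ω hω ε hε
  obtain ⟨m, hm⟩ := exists_nat_one_div_lt hε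
  filter_upwards [hω m] with i hi n hn
  exact (hi n hn).trans_le (by gcongr)

lemma ae_frogT_ne_top (h : IsFrogModel P X p) (hp : 1 / 2 < p) :
    ∀ᵐ ω ∂P, ∀ i : ℕ, frogT (frogS X ω) i ≠ ⊤ := by
  have hv : 0 < (2 * p - 1) / 2 := by linarith
  filter_upwards [h.ae_eventually_abs_frogS_sub_lt 0 hv, h.ae_step_eq_one_or_neg_one]
    with ω hω hX i
  obtain ⟨n, hin, hn⟩ := (((tendsto_natCast_atTop_atTop.const_mul_atTop hv).eventually_ge_atTop
    (i : ℝ)).and hω).exists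
  have hiS : (i : ℤ) ≤ frogS X ω 0 n := by
    have := abs_lt.mp hn
    exact_mod_cast (by linarith : (i : ℝ) ≤ frogS X ω 0 n)
  exact frogT_ne_top_of_le (frogS_zero X ω 0) (abs_frogS_succ_sub_le hX 0)
    (Int.natCast_nonneg i) hiS

end IsFrogModel

theorem frog_walk_at_activation_general
    {Ω : Type*} [MeasurableSpace Ω] (P : Measure Ω) [IsProbabilityMeasure P]
    (X : ℤ → ℕ → Ω → ℤ) (p : ℝ) (hmodel : IsFrogModel P X p)
    (hp : 1 / 2 ≤ p) :
    ∀ᵐ ω ∂P, Tendsto (fun i : ℕ =>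
        (frogS X ω i ((frogT (frogS X ω) i).toNat) : ℝ) / ((frogT (frogS X ω) i).toNat : ℝ))
      atTop (𝓝 (2 * p - 1)) := by
  have htop : ∀ᵐ ω ∂P, ∀ i : ℕ, frogT (frogS X ω) i = ⊤ → 2 * p - 1 = 0 := by
    rcases hp.eq_or_lt with rfl | hp
    · exact ae_of_all _ fun _ _ _ ↦ by norm_num
    filter_upwards [hmodel.ae_frogT_ne_top hp] with ω hω i hi using absurd hi (hω i)
  filter_upwards [hmodel.ae_eventually_forall_ge_abs_frogS_sub_lt,
    hmodel.ae_step_eq_one_or_neg_one, htop] with ω hdev hX htop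
  exact tendsto_div_frogT (frogS_zero X ω) (abs_frogS_succ_sub_le hX) hdev htop

/-- **Displacement at activation.**
In the frog model with drift `p ∈ [1/2, 1]`, almost surely `S_{T_i}^i / T_i → 2p - 1` as
`i → ∞` along the non-negative integers, where `T_i` is the (a.s. finite) activation time
of frog `i` and `S_{T_i}^i` the value of its attached walk at that time. -/
theorem frog_walk_at_activation
    {Ω : Type*} [MeasurableSpace Ω] (P : Measure Ω) [IsProbabilityMeasure P]
    (X : ℤ → ℕ → Ω → ℤ) (p : ℝ) (hmodel : IsFrogModel P X p)
    (hp : 1 / 2 ≤ p) (hp1 : p ≤ 1) :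
    ∀ᵐ ω ∂P, Tendsto (fun i : ℕ =>
        (frogS X ω i ((frogT (frogS X ω) i).toNat) : ℝ) / ((frogT (frogS X ω) i).toNat : ℝ))
      atTop (𝓝 (2 * p - 1)) :=
  frog_walk_at_activation_general P X p hmodel hp
end
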